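/- arXiv:1401.3738 — 9 statements merged into one kernel-verified Lean document; each statement's English description precedes it below -/
import Mathlib

section
/- Let E be a nontrivial finite-dimensional real inner product space, let p ≥ 2 be an integer, and let F : E → ℝ be a differentiable function that is homogeneous of degree p, i.e. F(c • x) = c^p F(x) for all c ∈ ℝ and x ∈ E. Suppose v̂ ∈ E satisfies ‖v̂‖ = 1, F(v̂) > 0, and F(v̂) ≥ F(w) for every w ∈ E with ‖w‖ = 1. Then for every λ > 0, the gradient of F at λ • v̂ equals (p · λ^(p-1) · F(v̂)) • v̂. -/
/-!
On the unit sphere, `v` is a constrained maximum of `F`, so the derivative of `F` at `v`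
vanishes on the tangent space `vᗮ` (differentiate `F` along great circles through `v`).
Hence `∇F(v)` is a multiple of `v`, and Euler's identity `DF(v)[v] = p F(v)` fixes the
multiple. Finally `∇F` is homogeneous of degree `p - 1`, which transports the formula
from `v` to `λ • v`.
-/

open RealInnerProductSpace Real Metric

section

variable {E : Type*} [NormedAddCommGroup E] [InnerProductSpace ℝ E]

theorem fderiv_apply_self_of_homogeneous {p : ℕ} {F : E → ℝ} {x : E}
    (hhom : ∀ c : ℝ, F (c • x) = c ^ p * F x) (hF : DifferentiableAt ℝ F x) :
    fderiv ℝ F x x = p * F x := by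
  have hline : HasDerivAt (fun c : ℝ => c • x) x 1 := by
    simpa using (hasDerivAt_id (1 : ℝ)).smul_const x
  have hchain : HasDerivAt (fun c : ℝ => F (c • x)) (fderiv ℝ F x x) 1 :=
    hF.hasFDerivAt.comp_hasDerivAt_of_eq 1 hline (one_smul ℝ x).symm
  have hpow : HasDerivAt (fun c : ℝ => c ^ p * F x) (p * F x) 1 := by
    simpa using (hasDerivAt_pow p (1 : ℝ)).mul_const (F x)
  exact (funext hhom ▸ hchain).unique hpow

theorem fderiv_smul_of_homogeneous {p : ℕ} (hp : 1 ≤ p) {F : E → ℝ}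
    (hhom : ∀ (c : ℝ) (x : E), F (c • x) = c ^ p * F x) {c : ℝ} (hc : c ≠ 0) (x : E) :
    fderiv ℝ F (c • x) = c ^ (p - 1) • fderiv ℝ F x := by
  have h : c • fderiv ℝ F (c • x) = c ^ p • fderiv ℝ F x := by
    have hcomp : (fun y => F (c • y)) = c ^ p • F := funext (hhom c)
    rw [← fderiv_comp_smul, hcomp, fderiv_const_smul_field]
    rfl
  rw [← pow_sub_mul_pow c hp, pow_one, mul_comm, mul_smul] at h
  exact smul_right_injective _ hc h

theorem norm_cos_smul_add_sin_smul {v u : E} (hv : ‖v‖ = 1) (hu : ‖u‖ = 1) (hvu : ⟪v, u⟫ = 0)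
    (t : ℝ) : ‖cos t • v + sin t • u‖ = 1 := by
  have hsq : ‖cos t • v + sin t • u‖ ^ 2 = 1 := by
    rw [norm_add_sq_real, real_inner_smul_left, real_inner_smul_right, hvu, norm_smul,
      norm_smul, hv, hu, norm_eq_abs, norm_eq_abs, mul_pow, mul_pow, sq_abs, sq_abs]
    simp [cos_sq_add_sin_sq]
  exact (pow_eq_one_iff_of_nonneg (norm_nonneg _) two_ne_zero).mp hsq

theorem fderiv_apply_eq_zero_of_isLocalMaxOn_sphere {F : E → ℝ} {v w : E}
    (hmax : IsLocalMaxOn F (sphere 0 1) v) (hv : ‖v‖ = 1) (hF : DifferentiableAt ℝ F v)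
    (hvw : ⟪v, w⟫ = 0) : fderiv ℝ F v w = 0 := by
  rcases eq_or_ne w 0 with rfl | hw
  · simp
  -- Fermat's rule along the great circle through `v` in the direction of `w`.
  set u := ‖w‖⁻¹ • w
  have hu : ‖u‖ = 1 := norm_smul_inv_norm hw
  have hvu : ⟪v, u⟫ = 0 := by rw [real_inner_smul_right, hvw, mul_zero]
  have hγ : HasDerivAt (fun t => cos t • v + sin t • u) u 0 := by
    simpa using ((hasDerivAt_cos 0).smul_const v).fun_add ((hasDerivAt_sin 0).smul_const u)
  set γ : ℝ → E := fun t => cos t • v + sin t • u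
  have hγ0 : γ 0 = v := by simp [γ]
  have hγmax : IsLocalMax (F ∘ γ) 0 := by
    refine Filter.Tendsto.eventually ?_ (hγ0 ▸ hmax)
    refine tendsto_nhdsWithin_iff.mpr ⟨hγ0 ▸ hγ.continuousAt.tendsto, ?_⟩
    exact Filter.Eventually.of_forall fun t => by
      simpa using norm_cos_smul_add_sin_smul hv hu hvu t
  have hu0 : fderiv ℝ F v u = 0 :=
    hγmax.hasDerivAt_eq_zero (hF.hasFDerivAt.comp_hasDerivAt_of_eq 0 hγ hγ0.symm)
  rw [← smul_inv_smul₀ (norm_ne_zero_iff.mpr hw) w, map_smul, hu0, smul_zero]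

theorem eq_inner_smul_of_forall_inner_eq_zero {v g : E} (hv : ‖v‖ = 1)
    (h : ∀ w, ⟪v, w⟫ = 0 → ⟪g, w⟫ = 0) : g = ⟪g, v⟫ • v := by
  set r := g - ⟪g, v⟫ • v
  have hvr : ⟪v, r⟫ = 0 := by
    rw [inner_sub_right, real_inner_smul_right, real_inner_self_eq_norm_sq, hv, real_inner_comm]
    ring
  have hrr : ⟪r, r⟫ = 0 := by
    rw [show ⟪r, r⟫ = ⟪g, r⟫ - ⟪g, v⟫ * ⟪v, r⟫ by rw [inner_sub_left, real_inner_smul_left],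
      h r hvr, hvr]
    ring
  exact (sub_eq_zero.mp (inner_self_eq_zero.mp hrr))

end

section

variable {E : Type*} [NormedAddCommGroup E] [InnerProductSpace ℝ E] [CompleteSpace E]

theorem gradient_smul_of_homogeneous {p : ℕ} (hp : 1 ≤ p) {F : E → ℝ}
    (hhom : ∀ (c : ℝ) (x : E), F (c • x) = c ^ p * F x) {c : ℝ} (hc : c ≠ 0) (x : E) :
    gradient F (c • x) = c ^ (p - 1) • gradient F x := by
  refine ext_inner_right ℝ fun w => ?_
  rw [inner_gradient_left, fderiv_smul_of_homogeneous hp hhom hc, real_inner_smul_left,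
    inner_gradient_left]
  rfl

theorem gradient_eq_of_isLocalMaxOn_sphere {p : ℕ} {F : E → ℝ} {v : E}
    (hhom : ∀ c : ℝ, F (c • v) = c ^ p * F v) (hF : DifferentiableAt ℝ F v)
    (hv : ‖v‖ = 1) (hmax : IsLocalMaxOn F (sphere 0 1) v) :
    gradient F v = (p * F v) • v := by
  have hradial : ⟪gradient F v, v⟫ = p * F v := by
    rw [inner_gradient_left, fderiv_apply_self_of_homogeneous hhom hF]
  rw [← hradial]
  refine eq_inner_smul_of_forall_inner_eq_zero hv fun w hvw => ?_
  rw [inner_gradient_left]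
  exact fderiv_apply_eq_zero_of_isLocalMaxOn_sphere hmax hv hF hvw

end

theorem radial_gradient_at_sphere_max_general
    {E : Type*} [NormedAddCommGroup E] [InnerProductSpace ℝ E]
    [FiniteDimensional ℝ E]
    (p : ℕ) (hp : 2 ≤ p)
    (F : E → ℝ) (hF : Differentiable ℝ F)
    (hhom : ∀ (c : ℝ) (x : E), F (c • x) = c ^ p * F x)
    (v : E) (hv : ‖v‖ = 1)
    (hmax : ∀ w : E, ‖w‖ = 1 → F w ≤ F v) :
    ∀ l : ℝ, 0 < l →
      gradient F (l • v) = ((p : ℝ) * l ^ (p - 1) * F v) • v := by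
  intro l hl
  have hmax_sphere : IsLocalMaxOn F (sphere 0 1) v :=
    IsMaxOn.localize fun w hw => hmax w (mem_sphere_zero_iff_norm.mp hw)
  rw [gradient_smul_of_homogeneous (by omega) hhom hl.ne',
    gradient_eq_of_isLocalMaxOn_sphere (hhom · v) (hF v) hv hmax_sphere, smul_smul]
  congr 1
  ring

/-- For a differentiable `p`-homogeneous function `F` (`p ≥ 2`) on a nontrivial
finite-dimensional real inner product space, if `F` attains a positive maximum on the unit
sphere at `v̂`, then for every `λ > 0` the gradient of `F` at `λ • v̂` equals
`(p · λ^(p-1) · F(v̂)) • v̂`. -/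
theorem radial_gradient_at_sphere_max
    {E : Type*} [NormedAddCommGroup E] [InnerProductSpace ℝ E]
    [FiniteDimensional ℝ E] [Nontrivial E]
    (p : ℕ) (hp : 2 ≤ p)
    (F : E → ℝ) (hF : Differentiable ℝ F)
    (hhom : ∀ (c : ℝ) (x : E), F (c • x) = c ^ p * F x)
    (v : E) (hv : ‖v‖ = 1) (hpos : 0 < F v)
    (hmax : ∀ w : E, ‖w‖ = 1 → F w ≤ F v) :
    ∀ l : ℝ, 0 < l →
      gradient F (l • v) = ((p : ℝ) * l ^ (p - 1) * F v) • v :=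
  radial_gradient_at_sphere_max_general p hp F hF hhom v hv hmax
end

section
/- Let k ≥ 1 be an integer, let c > 0, T > 0, let μ₁, …, μ_k ∈ ℝ, and let γ ∈ ℝ satisfy c·γ ≠ μ_j for every j. Let E = (E₁, …, E_k) : [0,∞) → ℝ^k be continuous with M := sup_{t ≥ 0} (T+t)^(1+γ) max_j |E_j(t)| < ∞. Then there exists a unique differentiable function u = (u₁, …, u_k) : [0,∞) → ℝ^k such that: (i) c·u_j'(t) + (μ_j/(T+t))·u_j(t) = E_j(t) for all t ≥ 0 and all j; (ii) sup_{t ≥ 0} (T+t)^γ max_j |u_j(t)| < ∞; and (iii) u_j(0) = 0 for every index j with μ_j > c·γ. Moreover, there is a constant C > 0 depending only on c, γ, μ₁, …, μ_k (in particular, independent of T and of E) such that sup_{t ≥ 0} (T+t)^γ max_j |u_j(t)| ≤ C·M. -/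
/-!
The equations decouple, so it suffices to treat one scalar equation `c u' + μ/(T+t) u = f`
with `m = μ/c ≠ γ`. The integrating factor `(T+t)^m` turns it into `((T+t)^m u)' = (T+t)^m f/c`,
whose right-hand side is `O((T+t)^(m-γ-1))`. If `m > γ` we take the primitive vanishing at `0`,
if `m < γ` the one vanishing at infinity; in both cases it is `O((T+t)^(m-γ)/|m-γ|)`, which gives
`|u| ≤ M/|μ - cγ| · (T+t)^(-γ)`. Two solutions differ by `w` with `(T+t)^m w` constant:
for `m > γ` the constant is killed by `w 0 = 0`, for `m < γ` by the weighted bound, since then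
`|w 0| T^m ≤ B (T+t)^(m-γ) → 0`.
-/

open Set MeasureTheory Filter Topology

theorem nonneg_of_abs_le_mul_rpow {x K X q : ℝ} (hX : 0 < X) (h : |x| ≤ K * X ^ q) : 0 ≤ K :=
  nonneg_of_mul_nonneg_left ((abs_nonneg x).trans h) (Real.rpow_pos_of_pos hX q)

theorem rpow_mul_abs_le_of_abs_le_mul_rpow_neg {x A X γ : ℝ} (hX : 0 < X)
    (h : |x| ≤ A * X ^ (-γ)) : X ^ γ * |x| ≤ A :=
  calc X ^ γ * |x| ≤ X ^ γ * (A * X ^ (-γ)) := by gcongr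
    _ = A := by rw [Real.rpow_neg hX.le]; field_simp

theorem integral_Ioi_const_add_rpow {T a q : ℝ} (hq : q < -1) (ha : 0 < T + a) :
    ∫ s in Ioi a, (T + s) ^ q = -(T + a) ^ (q + 1) / (q + 1) := by
  have h := (measurePreserving_add_left volume T).setIntegral_preimage_emb
    (measurableEmbedding_addLeft T) (fun x => x ^ q) (Ioi (T + a))
  rw [preimage_const_add_Ioi, add_sub_cancel_left] at h
  rw [h, integral_Ioi_rpow_of_lt hq ha]

theorem integrableOn_Ioi_const_add_rpow {T a q : ℝ} (hq : q < -1) (ha : 0 < T + a) :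
    IntegrableOn (fun s => (T + s) ^ q) (Ioi a) := by
  simpa only [add_comm T] using integrableOn_add_rpow_Ioi_of_lt hq (by linarith : -T < a)

theorem integral_const_add_rpow {T t q : ℝ} (hq : -1 < q) :
    ∫ s in (0:ℝ)..t, (T + s) ^ q = ((T + t) ^ (q + 1) - T ^ (q + 1)) / (q + 1) := by
  rw [intervalIntegral.integral_comp_add_left (fun x => x ^ q), integral_rpow (Or.inl hq),
    add_zero]

theorem intervalIntegrable_const_add_rpow {T t q : ℝ} (hq : -1 < q) :
    IntervalIntegrable (fun s => (T + s) ^ q) volume 0 t := by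
  simpa using
    (intervalIntegral.intervalIntegrable_rpow' hq (a := T + 0) (b := T + t)).comp_add_left T

section Primitive

variable {g : ℝ → ℝ} {T K p t : ℝ}

theorem abs_intervalIntegral_le_of_abs_le_rpow (hT : 0 < T) (hp : 0 < p)
    (hgK : ∀ s ∈ Ici (0:ℝ), |g s| ≤ K * (T + s) ^ (p - 1)) (ht : 0 ≤ t) :
    |∫ s in (0:ℝ)..t, g s| ≤ K / p * (T + t) ^ p := by
  have hK : 0 ≤ K := nonneg_of_abs_le_mul_rpow (by linarith) (hgK 0 self_mem_Ici)
  rw [← Real.norm_eq_abs]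
  calc ‖∫ s in (0:ℝ)..t, g s‖ ≤ ∫ s in (0:ℝ)..t, K * (T + s) ^ (p - 1) :=
        intervalIntegral.norm_integral_le_of_norm_le ht
          (.of_forall fun s hs => (Real.norm_eq_abs _).trans_le (hgK s (mem_Ici.2 hs.1.le)))
          ((intervalIntegrable_const_add_rpow (T := T) (q := p - 1) (by linarith)).const_mul K)
    _ = K / p * ((T + t) ^ p - T ^ p) := by
        rw [intervalIntegral.integral_const_mul, integral_const_add_rpow (by linarith),
          sub_add_cancel]
        ring
    _ ≤ K / p * (T + t) ^ p := by
        gcongr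
        exact sub_le_self _ (Real.rpow_nonneg hT.le p)

theorem integrableOn_Ioi_of_abs_le_rpow (hT : 0 < T) (hp : p < 0) (hg : AEStronglyMeasurable g)
    (hgK : ∀ s ∈ Ici (0:ℝ), |g s| ≤ K * (T + s) ^ (p - 1)) (ht : 0 ≤ t) :
    IntegrableOn g (Ioi t) :=
  ((integrableOn_Ioi_const_add_rpow (T := T) (q := p - 1) (by linarith)
    (by linarith)).const_mul K).mono' hg.restrict <|
    (ae_restrict_iff' measurableSet_Ioi).2 <| .of_forall fun s hs =>
      (Real.norm_eq_abs _).trans_le (hgK s (mem_Ici.2 (ht.trans hs.out.le)))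

theorem abs_integral_Ioi_le_of_abs_le_rpow (hT : 0 < T) (hp : p < 0)
    (hgK : ∀ s ∈ Ici (0:ℝ), |g s| ≤ K * (T + s) ^ (p - 1)) (ht : 0 ≤ t) :
    |∫ s in Ioi t, g s| ≤ K / -p * (T + t) ^ p := by
  rw [← Real.norm_eq_abs]
  calc ‖∫ s in Ioi t, g s‖ ≤ ∫ s in Ioi t, K * (T + s) ^ (p - 1) :=
        norm_integral_le_of_norm_le
          ((integrableOn_Ioi_const_add_rpow (T := T) (q := p - 1) (by linarith)
            (by linarith)).const_mul K)
          ((ae_restrict_iff' measurableSet_Ioi).2 <| .of_forall fun s hs =>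
            (Real.norm_eq_abs _).trans_le (hgK s (mem_Ici.2 (ht.trans hs.out.le))))
    _ = K / -p * (T + t) ^ p := by
        rw [integral_const_mul,
          integral_Ioi_const_add_rpow (q := p - 1) (by linarith) (by linarith), sub_add_cancel]
        ring

theorem exists_primitive_abs_le_rpow (hT : 0 < T) (hp : p ≠ 0)
    (hg : ContinuousOn g (Ici 0)) (hgK : ∀ s ∈ Ici (0:ℝ), |g s| ≤ K * (T + s) ^ (p - 1)) :
    ∃ G : ℝ → ℝ, (∀ t ∈ Ici (0:ℝ), HasDerivWithinAt G (g t) (Ici 0) t) ∧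
      (0 < p → G 0 = 0) ∧ ∀ t ∈ Ici (0:ℝ), |G t| ≤ K / |p| * (T + t) ^ p := by
  set g' : ℝ → ℝ := fun s => g (max s 0)
  have hg'g : EqOn g' g (Ici 0) := fun s hs => by simp only [g', max_eq_left hs.out]
  have hg' : Continuous g' :=
    hg.comp_continuous (continuous_id.max continuous_const) fun s => le_max_right s 0
  have hg'K : ∀ s ∈ Ici (0:ℝ), |g' s| ≤ K * (T + s) ^ (p - 1) := fun s hs =>
    hg'g hs ▸ hgK s hs
  have hI : ∀ t, HasDerivAt (fun t => ∫ s in (0:ℝ)..t, g' s) (g' t) t := fun t =>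
    intervalIntegral.integral_hasDerivAt_right (hg'.intervalIntegrable _ _)
      hg'.stronglyMeasurable.stronglyMeasurableAtFilter hg'.continuousAt
  rcases hp.lt_or_gt with hp | hp
  · have hint : ∀ t ∈ Ici (0:ℝ), IntegrableOn g' (Ioi t) := fun t ht =>
      integrableOn_Ioi_of_abs_le_rpow hT hp hg'.aestronglyMeasurable hg'K ht
    have hG : ∀ t ∈ Ici (0:ℝ), -∫ s in Ioi t, g' s
        = (∫ s in (0:ℝ)..t, g' s) - ∫ s in Ioi (0:ℝ), g' s := fun t ht => by
      rw [← intervalIntegral.integral_interval_add_Ioi (hint 0 self_mem_Ici) (hint t ht)]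
      ring
    refine ⟨fun t => -∫ s in Ioi t, g' s, fun t ht => ?_, fun h => absurd h hp.not_gt,
      fun t ht => ?_⟩
    · rw [← hg'g ht]
      exact ((hI t).sub_const _).hasDerivWithinAt.congr (fun s hs => hG s hs) (hG t ht)
    · rw [abs_neg, abs_of_neg hp]
      exact abs_integral_Ioi_le_of_abs_le_rpow hT hp hg'K ht
  · refine ⟨fun t => ∫ s in (0:ℝ)..t, g' s, fun t ht => hg'g ht ▸ (hI t).hasDerivWithinAt,
      fun _ => intervalIntegral.integral_same, fun t ht => ?_⟩
    rw [abs_of_pos hp]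
    exact abs_intervalIntegral_le_of_abs_le_rpow hT hp hg'K ht

end Primitive

def SolvesEulerODE (c μ T : ℝ) (f u : ℝ → ℝ) : Prop :=
  ∀ t ∈ Ici (0:ℝ), ∃ d, HasDerivWithinAt u d (Ici 0) t ∧ c * d + μ / (T + t) * u t = f t

namespace SolvesEulerODE

variable {c μ γ T : ℝ} {f u v w : ℝ → ℝ}

theorem of_hasDerivWithinAt_rpow_mul {G : ℝ → ℝ} (hc : c ≠ 0) (hT : 0 < T)
    (hG : ∀ t ∈ Ici (0:ℝ), HasDerivWithinAt G ((T + t) ^ (μ / c) * f t / c) (Ici 0) t) :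
    SolvesEulerODE c μ T f fun t => (T + t) ^ (-(μ / c)) * G t := by
  intro t ht
  have hX : 0 < T + t := by linarith [ht.out]
  have hpow := (((hasDerivAt_id' t).const_add T).rpow_const (p := -(μ / c))
    (Or.inl hX.ne')).hasDerivWithinAt (s := Ici 0)
  refine ⟨_, hpow.mul (hG t ht), ?_⟩
  dsimp only
  rw [Real.rpow_sub_one hX.ne', Real.rpow_neg hX.le]
  field_simp
  ring

theorem continuousOn (hu : SolvesEulerODE c μ T f u) : ContinuousOn u (Ici 0) := fun t ht =>
  (hu t ht).choose_spec.1.continuousWithinAt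

theorem sub (hv : SolvesEulerODE c μ T f v) (hu : SolvesEulerODE c μ T f u) :
    SolvesEulerODE c μ T 0 (v - u) := fun t ht => by
  obtain ⟨dv, hdv, hev⟩ := hv t ht
  obtain ⟨du, hdu, heu⟩ := hu t ht
  refine ⟨dv - du, hdv.sub hdu, ?_⟩
  simp only [Pi.sub_apply, Pi.zero_apply]
  linear_combination hev - heu

theorem mul_rpow_eq (hc : c ≠ 0) (hT : 0 < T) (hw : SolvesEulerODE c μ T 0 w) :
    ∀ t ∈ Ici (0:ℝ), w t * (T + t) ^ (μ / c) = w 0 * T ^ (μ / c) := by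
  intro t ht
  have hpos : ∀ s ∈ Ici (0:ℝ), 0 < T + s := fun s hs => by linarith [hs.out]
  have hcont : ContinuousOn (fun s => w s * (T + s) ^ (μ / c)) (Icc 0 t) :=
    (hw.continuousOn.mono Icc_subset_Ici_self).mul <|
      (continuousOn_const.add continuousOn_id).rpow_const fun s hs =>
        Or.inl (hpos s hs.1).ne'
  have hderiv : ∀ s ∈ Ico 0 t,
      HasDerivWithinAt (fun s => w s * (T + s) ^ (μ / c)) 0 (Ici s) s := by
    intro s hs
    obtain ⟨d, hd, heq⟩ := hw s hs.1
    have hX := hpos s hs.1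
    have hpow := ((hasDerivAt_id' s).const_add T).rpow_const (p := μ / c) (Or.inl hX.ne')
    refine ((hd.mono (Ici_subset_Ici.2 hs.1)).mul hpow.hasDerivWithinAt).congr_deriv ?_
    have hd' : d = -(μ / c) * w s / (T + s) := by
      rw [Pi.zero_apply] at heq
      field_simp at heq ⊢
      linear_combination heq
    rw [hd', Real.rpow_sub_one hX.ne']
    ring
  simpa using constant_of_has_deriv_right_zero hcont hderiv t (right_mem_Icc.2 ht)

theorem eq_zero (hc : 0 < c) (hT : 0 < T) (hμ : c * γ ≠ μ)
    (hw : SolvesEulerODE c μ T 0 w) {B : ℝ} (hB : ∀ t ∈ Ici (0:ℝ), (T + t) ^ γ * |w t| ≤ B)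
    (h0 : c * γ < μ → w 0 = 0) :
    ∀ t ∈ Ici (0:ℝ), w t = 0 := by
  set m := μ / c
  have hconst := hw.mul_rpow_eq hc.ne' hT
  suffices hw0 : w 0 = 0 by
    intro t ht
    have hX : 0 < T + t := by linarith [ht.out]
    have h := hconst t ht
    rw [hw0, zero_mul] at h
    exact (mul_eq_zero.1 h).resolve_right (Real.rpow_pos_of_pos hX m).ne'
  rcases hμ.lt_or_gt with hlt | hgt
  · exact h0 hlt
  have hmγ : m - γ < 0 := by
    rw [sub_neg, div_lt_iff₀ hc, mul_comm]; exact hgt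
  have hle : ∀ t ∈ Ici (0:ℝ), |w 0| * T ^ m ≤ B * (T + t) ^ (m - γ) := by
    intro t ht
    have hX : 0 < T + t := by linarith [ht.out]
    calc |w 0| * T ^ m = (T + t) ^ γ * |w t| * (T + t) ^ (m - γ) := by
          rw [← abs_of_pos (Real.rpow_pos_of_pos hT m), ← abs_mul, ← hconst t ht, abs_mul,
            abs_of_pos (Real.rpow_pos_of_pos hX m), Real.rpow_sub hX]
          field_simp
      _ ≤ B * (T + t) ^ (m - γ) := by gcongr; exact hB t ht
  have hlim : Tendsto (fun t => B * (T + t) ^ (m - γ)) atTop (𝓝 0) := by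
    simpa using ((tendsto_rpow_neg_atTop (neg_pos.2 hmγ)).comp
      (tendsto_atTop_add_const_left _ T tendsto_id)).const_mul B
  have hzero : |w 0| * T ^ m ≤ 0 :=
    ge_of_tendsto hlim ((eventually_ge_atTop 0).mono hle)
  exact abs_eq_zero.1 (le_antisymm
    (nonpos_of_mul_nonpos_left hzero (Real.rpow_pos_of_pos hT m)) (abs_nonneg _))

theorem eqOn (hc : 0 < c) (hT : 0 < T) (hμ : c * γ ≠ μ)
    (hu : SolvesEulerODE c μ T f u) (hv : SolvesEulerODE c μ T f v) {Bu Bv : ℝ}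
    (hBu : ∀ t ∈ Ici (0:ℝ), (T + t) ^ γ * |u t| ≤ Bu)
    (hBv : ∀ t ∈ Ici (0:ℝ), (T + t) ^ γ * |v t| ≤ Bv)
    (hu0 : c * γ < μ → u 0 = 0) (hv0 : c * γ < μ → v 0 = 0) :
    ∀ t ∈ Ici (0:ℝ), v t = u t := by
  have hB : ∀ t ∈ Ici (0:ℝ), (T + t) ^ γ * |(v - u) t| ≤ Bv + Bu := fun t ht => by
    have hX : 0 < T + t := by linarith [ht.out]
    calc (T + t) ^ γ * |v t - u t| ≤ (T + t) ^ γ * (|v t| + |u t|) := by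
          gcongr; exact abs_sub _ _
      _ ≤ Bv + Bu := by rw [mul_add]; exact add_le_add (hBv t ht) (hBu t ht)
  have h0 : c * γ < μ → (v - u) 0 = 0 := fun h => by simp [hu0 h, hv0 h]
  exact fun t ht => sub_eq_zero.1 ((hv.sub hu).eq_zero hc hT hμ hB h0 t ht)

end SolvesEulerODE

theorem exists_solvesEulerODE {c μ γ T M : ℝ} {f : ℝ → ℝ} (hc : 0 < c) (hT : 0 < T)
    (hμ : c * γ ≠ μ) (hf : ContinuousOn f (Ici 0))
    (hfM : ∀ t ∈ Ici (0:ℝ), |f t| ≤ M * (T + t) ^ (-(1 + γ))) :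
    ∃ u, SolvesEulerODE c μ T f u ∧ (c * γ < μ → u 0 = 0) ∧
      ∀ t ∈ Ici (0:ℝ), |u t| ≤ M / |μ - c * γ| * (T + t) ^ (-γ) := by
  set m := μ / c
  have hpos : ∀ t ∈ Ici (0:ℝ), 0 < T + t := fun t ht => by linarith [ht.out]
  have hp : m - γ ≠ 0 := by
    rw [sub_ne_zero, Ne, div_eq_iff hc.ne', mul_comm]; exact hμ.symm
  have hg : ContinuousOn (fun s => (T + s) ^ m * f s / c) (Ici 0) :=
    (((continuousOn_const.add continuousOn_id).rpow_const fun s hs =>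
      Or.inl (hpos s hs).ne').mul hf).div_const c
  have hgK : ∀ s ∈ Ici (0:ℝ), |(T + s) ^ m * f s / c| ≤ M / c * (T + s) ^ (m - γ - 1) := by
    intro s hs
    have hX := hpos s hs
    rw [abs_div, abs_mul, abs_of_pos (Real.rpow_pos_of_pos hX m), abs_of_pos hc,
      show m - γ - 1 = m + -(1 + γ) by ring, Real.rpow_add hX]
    calc (T + s) ^ m * |f s| / c ≤ (T + s) ^ m * (M * (T + s) ^ (-(1 + γ))) / c := by
          gcongr; exact hfM s hs
      _ = M / c * ((T + s) ^ m * (T + s) ^ (-(1 + γ))) := by ring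
  obtain ⟨G, hG, hG0, hGK⟩ := exists_primitive_abs_le_rpow hT hp hg hgK
  refine ⟨fun t => (T + t) ^ (-m) * G t,
    SolvesEulerODE.of_hasDerivWithinAt_rpow_mul hc.ne' hT hG, fun h => ?_, fun t ht => ?_⟩
  · have hmγ : 0 < m - γ := by rw [sub_pos, lt_div_iff₀ hc, mul_comm]; exact h
    simp [hG0 hmγ]
  · have hX := hpos t ht
    have hcp : c * |m - γ| = |μ - c * γ| := by
      rw [← abs_of_pos hc, ← abs_mul, abs_of_pos hc, mul_sub, mul_div_cancel₀ _ hc.ne']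
    calc |(T + t) ^ (-m) * G t| ≤ (T + t) ^ (-m) * (M / c / |m - γ| * (T + t) ^ (m - γ)) := by
          rw [abs_mul, abs_of_pos (Real.rpow_pos_of_pos hX _)]; gcongr; exact hGK t ht
      _ = M / |μ - c * γ| * (T + t) ^ (-γ) := by
          rw [← hcp, Real.rpow_neg hX.le, Real.rpow_neg hX.le, Real.rpow_sub hX]
          field_simp

theorem kernel_projected_ODE_system_general
    (k : ℕ) (c γ : ℝ) (hc : 0 < c) (μ : Fin k → ℝ)
    (hγ : ∀ j, c * γ ≠ μ j) :
    ∃ C : ℝ, 0 < C ∧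
      ∀ T : ℝ, 0 < T →
      ∀ E : ℝ → Fin k → ℝ, (∀ j, ContinuousOn (fun t => E t j) (Ici 0)) →
      ∀ M : ℝ,
        (∀ t ∈ Ici (0 : ℝ), ∀ j, |E t j| ≤ M * (T + t) ^ (-(1 + γ))) →
        ∃ u : ℝ → Fin k → ℝ,
          -- (i) the ODE `c·u_j' + (μ_j/(T+t))·u_j = E_j` holds on `[0,∞)`
          ((∀ t ∈ Ici (0 : ℝ), ∀ j, ∃ d : ℝ,
              HasDerivWithinAt (fun s => u s j) d (Ici 0) t ∧
              c * d + μ j / (T + t) * u t j = E t j) ∧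
           -- (ii) the weighted sup norm is finite
           (∃ B : ℝ, ∀ t ∈ Ici (0 : ℝ), ∀ j, (T + t) ^ γ * |u t j| ≤ B) ∧
           -- (iii) vanishing initial conditions when `μ_j > c·γ`
           (∀ j, c * γ < μ j → u 0 j = 0)) ∧
          -- uniqueness on `[0,∞)` among solutions satisfying (i)-(iii)
          (∀ v : ℝ → Fin k → ℝ,
            ((∀ t ∈ Ici (0 : ℝ), ∀ j, ∃ d : ℝ,
                HasDerivWithinAt (fun s => v s j) d (Ici 0) t ∧
                c * d + μ j / (T + t) * v t j = E t j) ∧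
             (∃ B : ℝ, ∀ t ∈ Ici (0 : ℝ), ∀ j, (T + t) ^ γ * |v t j| ≤ B) ∧
             (∀ j, c * γ < μ j → v 0 j = 0)) →
            ∀ t ∈ Ici (0 : ℝ), ∀ j, v t j = u t j) ∧
          -- the a priori estimate with constant independent of `T` and `E`
          (∀ t ∈ Ici (0 : ℝ), ∀ j, |u t j| ≤ C * M * (T + t) ^ (-γ)) := by
  set C := 1 + ∑ j, |μ j - c * γ|⁻¹
  refine ⟨C, by positivity, fun T hT E hE M hEM => ?_⟩
  choose u hsol hu0 hubound using fun j =>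
    exists_solvesEulerODE hc hT (hγ j) (hE j) fun t ht => hEM t ht j
  have hest : ∀ t ∈ Ici (0:ℝ), ∀ j, |u j t| ≤ C * M * (T + t) ^ (-γ) := by
    intro t ht j
    have hX : 0 < T + t := by linarith [ht.out]
    have hM : 0 ≤ M := nonneg_of_abs_le_mul_rpow (by linarith) (hEM 0 self_mem_Ici j)
    have hCj : |μ j - c * γ|⁻¹ ≤ C := by
      have := Finset.single_le_sum (f := fun i => |μ i - c * γ|⁻¹)
        (fun i _ => inv_nonneg.2 (abs_nonneg _)) (Finset.mem_univ j)
      simp only [C]; linarith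
    calc |u j t| ≤ M / |μ j - c * γ| * (T + t) ^ (-γ) := hubound j t ht
      _ ≤ C * M * (T + t) ^ (-γ) := by rw [div_eq_inv_mul]; gcongr
  have hweighted : ∀ t ∈ Ici (0:ℝ), ∀ j, (T + t) ^ γ * |u j t| ≤ C * M := fun t ht j =>
    rpow_mul_abs_le_of_abs_le_mul_rpow_neg (by linarith [ht.out]) (hest t ht j)
  refine ⟨fun t j => u j t, ⟨fun t ht j => hsol j t ht, ⟨C * M, hweighted⟩, hu0⟩, ?_,
    hest⟩
  rintro v ⟨hv, ⟨B, hvB⟩, hv0⟩ t ht j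
  exact (hsol j).eqOn hc hT (hγ j) (fun s hs => hv s hs j) (fun s hs => hweighted s hs j)
    (fun s hs => hvB s hs j) (hu0 j) (hv0 j) t ht

/-- Solvability with polynomial decay estimates, uniquely subject to vanishing
initial conditions in the unstable directions, of the system of ODEs
`c·u_j' + (μ_j/(T+t))·u_j = E_j` on `[0,∞)`, with a constant independent of `T` and `E`. -/
theorem kernel_projected_ODE_system
    (k : ℕ) (hk : 1 ≤ k) (c γ : ℝ) (hc : 0 < c) (μ : Fin k → ℝ)
    (hγ : ∀ j, c * γ ≠ μ j) :
    ∃ C : ℝ, 0 < C ∧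
      ∀ T : ℝ, 0 < T →
      ∀ E : ℝ → Fin k → ℝ, (∀ j, ContinuousOn (fun t => E t j) (Ici 0)) →
      ∀ M : ℝ,
        (∀ t ∈ Ici (0 : ℝ), ∀ j, |E t j| ≤ M * (T + t) ^ (-(1 + γ))) →
        ∃ u : ℝ → Fin k → ℝ,
          -- (i) the ODE `c·u_j' + (μ_j/(T+t))·u_j = E_j` holds on `[0,∞)`
          ((∀ t ∈ Ici (0 : ℝ), ∀ j, ∃ d : ℝ,
              HasDerivWithinAt (fun s => u s j) d (Ici 0) t ∧
              c * d + μ j / (T + t) * u t j = E t j) ∧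
           -- (ii) the weighted sup norm is finite
           (∃ B : ℝ, ∀ t ∈ Ici (0 : ℝ), ∀ j, (T + t) ^ γ * |u t j| ≤ B) ∧
           -- (iii) vanishing initial conditions when `μ_j > c·γ`
           (∀ j, c * γ < μ j → u 0 j = 0)) ∧
          -- uniqueness on `[0,∞)` among solutions satisfying (i)-(iii)
          (∀ v : ℝ → Fin k → ℝ,
            ((∀ t ∈ Ici (0 : ℝ), ∀ j, ∃ d : ℝ,
                HasDerivWithinAt (fun s => v s j) d (Ici 0) t ∧
                c * d + μ j / (T + t) * v t j = E t j) ∧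
             (∃ B : ℝ, ∀ t ∈ Ici (0 : ℝ), ∀ j, (T + t) ^ γ * |v t j| ≤ B) ∧
             (∀ j, c * γ < μ j → v 0 j = 0)) →
            ∀ t ∈ Ici (0 : ℝ), ∀ j, v t j = u t j) ∧
          -- the a priori estimate with constant independent of `T` and `E`
          (∀ t ∈ Ici (0 : ℝ), ∀ j, |u t j| ≤ C * M * (T + t) ^ (-γ)) :=
  kernel_projected_ODE_system_general k c γ hc μ hγ
end

section
/- Let δ > 0, q ≥ 0, and T ≥ 1. Let E : [0,∞) → ℝ be continuous and suppose M ≥ 0 satisfies |E(t)| ≤ M·(T+t)^(-q) for all t ≥ 0. Then the function u(t) = ∫_0^t e^{δ(τ - t)} E(τ) dτ is differentiable, satisfies u'(t) + δ·u(t) = E(t) for all t ≥ 0 and u(0) = 0, and there exists a constant C > 0 depending only on δ and q (in particular, independent of T, M and E) such that |u(t)| ≤ C·M·(T+t)^(-q) for all t ≥ 0. -/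
/-!
The weight `(T + t) ^ (-q)` varies slowly compared with the kernel `exp (δ * (τ - t))`:
since `T + t ≤ (T + τ) * (1 + (t - τ))` when `T + τ ≥ 1`, and
`1 + x ≤ (1 + ε⁻¹) * exp (ε * x)`, moving the weight from `τ` to `t` costs only a factor
`(1 + ε⁻¹) ^ q * exp (ε * q * (t - τ))`. For `ε * q < δ` the kernel absorbs this loss, and
integrating the remaining exponential gives a bound uniform in `t`, `T` and `E`. The equation
itself follows from writing `u t = exp (-δ t) * ∫ τ in 0..t, exp (δ τ) * E τ` and the
fundamental theorem of calculus.
-/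

open Set Real

theorem one_add_le_mul_exp {ε x : ℝ} (hε : 0 < ε) (hx : 0 ≤ x) :
    1 + x ≤ (1 + ε⁻¹) * exp (ε * x) :=
  calc 1 + x ≤ (1 + ε⁻¹) * (ε * x + 1) := by
        have : ε⁻¹ * ε = 1 := inv_mul_cancel₀ hε.ne'
        nlinarith [mul_nonneg hε.le hx]
    _ ≤ (1 + ε⁻¹) * exp (ε * x) := by gcongr; exact add_one_le_exp _

theorem one_add_rpow_le_mul_exp {ε q x : ℝ} (hε : 0 < ε) (hq : 0 ≤ q) (hx : 0 ≤ x) :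
    (1 + x) ^ q ≤ (1 + ε⁻¹) ^ q * exp (ε * q * x) := by
  calc (1 + x) ^ q ≤ ((1 + ε⁻¹) * exp (ε * x)) ^ q := by
        gcongr
        exact one_add_le_mul_exp hε hx
    _ = (1 + ε⁻¹) ^ q * exp (ε * q * x) := by
        rw [mul_rpow (by positivity) (exp_pos _).le, ← exp_mul, mul_right_comm]

theorem rpow_neg_le_mul_exp_mul_rpow_neg_add {ε q s x : ℝ} (hε : 0 < ε) (hq : 0 ≤ q)
    (hs : 1 ≤ s) (hx : 0 ≤ x) :
    s ^ (-q) ≤ (1 + ε⁻¹) ^ q * exp (ε * q * x) * (s + x) ^ (-q) := by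
  have hs₀ : 0 < s := by linarith
  have key : (s + x) ^ q ≤ s ^ q * ((1 + ε⁻¹) ^ q * exp (ε * q * x)) :=
    calc (s + x) ^ q ≤ (s * (1 + x)) ^ q := by gcongr; nlinarith
      _ = s ^ q * (1 + x) ^ q := mul_rpow hs₀.le (by linarith)
      _ ≤ s ^ q * ((1 + ε⁻¹) ^ q * exp (ε * q * x)) := by
          gcongr; exact one_add_rpow_le_mul_exp hε hq hx
  rw [rpow_neg hs₀.le, rpow_neg (by linarith), ← div_eq_mul_inv, inv_le_iff_one_le_mul₀',
    ← mul_div_assoc, one_le_div₀]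
  · exact key
  all_goals positivity

theorem integral_exp_mul_sub_le {c t : ℝ} (hc : 0 < c) :
    ∫ τ in (0 : ℝ)..t, exp (c * (τ - t)) ≤ c⁻¹ := by
  simp only [mul_sub]
  rw [intervalIntegral.integral_comp_mul_sub (fun τ => exp τ) hc.ne', integral_exp]
  simp only [sub_self, exp_zero, mul_zero, zero_sub, smul_eq_mul]
  exact mul_le_of_le_one_right (inv_nonneg.2 hc.le) (by linarith [exp_pos (-(c * t))])

theorem hasDerivWithinAt_integral_of_continuousOn_Ici {F : Type*} [NormedAddCommGroup F]
    [NormedSpace ℝ F] [CompleteSpace F] {f : ℝ → F} {a t : ℝ} (hf : ContinuousOn f (Ici a))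
    (ht : t ∈ Ici a) :
    HasDerivWithinAt (fun s => ∫ τ in a..s, f τ) (f t) (Ici a) t := by
  have hg : Continuous fun τ => f (max a τ) :=
    hf.comp_continuous (continuous_const.max continuous_id) fun τ => le_max_left a τ
  have hfg : ∀ s ∈ Ici a, ∫ τ in a..s, f τ = ∫ τ in a..s, f (max a τ) := fun s hs =>
    intervalIntegral.integral_congr fun τ hτ => by
      rw [uIcc_of_le hs] at hτ
      rw [max_eq_right hτ.1]
  have := (hg.integral_hasStrictDerivAt a t).hasDerivAt.hasDerivWithinAt (s := Ici a)
  rw [max_eq_right ht] at this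
  exact this.congr hfg (hfg t ht)

theorem hasDerivWithinAt_integral_exp_mul_sub {δ a t : ℝ} {E : ℝ → ℝ}
    (hE : ContinuousOn E (Ici a)) (ht : t ∈ Ici a) :
    HasDerivWithinAt (fun s => ∫ τ in a..s, exp (δ * (τ - s)) * E τ)
      (E t - δ * ∫ τ in a..t, exp (δ * (τ - t)) * E τ) (Ici a) t := by
  have hfactor : ∀ s, ∫ τ in a..s, exp (δ * (τ - s)) * E τ =
      exp (-(δ * s)) * ∫ τ in a..s, exp (δ * τ) * E τ := fun s => by
    rw [← intervalIntegral.integral_const_mul]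
    congr 1 with τ
    rw [← mul_assoc, ← exp_add]
    ring_nf
  have hexp : HasDerivAt (fun s => exp (-(δ * s))) (-δ * exp (-(δ * t))) t := by
    simpa [mul_comm] using ((hasDerivAt_id t).const_mul δ).neg.exp
  have hint : HasDerivWithinAt (fun s => ∫ τ in a..s, exp (δ * τ) * E τ)
      (exp (δ * t) * E t) (Ici a) t :=
    hasDerivWithinAt_integral_of_continuousOn_Ici
      ((continuous_exp.comp (continuous_const_mul δ)).continuousOn.mul hE) ht
  simp only [hfactor]
  refine (hexp.hasDerivWithinAt.mul hint).congr_deriv ?_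
  have : exp (-(δ * t)) * exp (δ * t) = 1 := by rw [← exp_add, neg_add_cancel, exp_zero]
  linear_combination E t * this

theorem abs_integral_exp_mul_sub_le {δ q T M t : ℝ} {E : ℝ → ℝ} (hδ : 0 < δ)
    (hq : 0 ≤ q) (hT : 1 ≤ T) (hM : 0 ≤ M)
    (hE : ∀ τ ∈ Ici (0 : ℝ), |E τ| ≤ M * (T + τ) ^ (-q))
    (ht : 0 ≤ t) :
    |∫ τ in (0 : ℝ)..t, exp (δ * (τ - t)) * E τ| ≤
      (1 + (q + 1) / δ) ^ q * ((q + 1) / δ) * M * (T + t) ^ (-q) := by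
  -- this choice of `ε` leaves the kernel the decay rate `δ - ε * q = ε`
  set ε := δ / (q + 1)
  have hε : 0 < ε := by positivity
  have hpt : ∀ τ ∈ Ioc 0 t, ‖exp (δ * (τ - t)) * E τ‖ ≤
      (1 + ε⁻¹) ^ q * M * (T + t) ^ (-q) * exp (ε * (τ - t)) := by
    rintro τ ⟨hτ, hτt⟩
    have hweight := rpow_neg_le_mul_exp_mul_rpow_neg_add hε hq (s := T + τ) (x := t - τ)
      (by linarith) (by linarith)
    rw [add_add_sub_cancel] at hweight
    have hexp : exp (δ * (τ - t)) * exp (ε * q * (t - τ)) = exp (ε * (τ - t)) := by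
      rw [← exp_add]; congr 1; simp only [ε]; field_simp; ring
    rw [Real.norm_eq_abs, abs_mul, abs_of_pos (exp_pos _)]
    calc exp (δ * (τ - t)) * |E τ| ≤ exp (δ * (τ - t)) * (M * (T + τ) ^ (-q)) := by
          gcongr; exact hE τ hτ.le
      _ ≤ exp (δ * (τ - t)) *
            (M * ((1 + ε⁻¹) ^ q * exp (ε * q * (t - τ)) * (T + t) ^ (-q))) := by
          gcongr
      _ = (1 + ε⁻¹) ^ q * M * (T + t) ^ (-q) * exp (ε * (τ - t)) := by
          rw [← hexp]; ring
  calc |∫ τ in (0 : ℝ)..t, exp (δ * (τ - t)) * E τ|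
      ≤ ∫ τ in (0 : ℝ)..t, (1 + ε⁻¹) ^ q * M * (T + t) ^ (-q) * exp (ε * (τ - t)) :=
        intervalIntegral.norm_integral_le_of_norm_le ht (.of_forall hpt)
          (by apply Continuous.intervalIntegrable; fun_prop)
    _ = (1 + ε⁻¹) ^ q * M * (T + t) ^ (-q) * ∫ τ in (0 : ℝ)..t, exp (ε * (τ - t)) :=
        intervalIntegral.integral_const_mul _ _
    _ ≤ (1 + ε⁻¹) ^ q * M * (T + t) ^ (-q) * ε⁻¹ := by
        gcongr; exact integral_exp_mul_sub_le hε
    _ = (1 + (q + 1) / δ) ^ q * ((q + 1) / δ) * M * (T + t) ^ (-q) := by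
        simp only [ε, inv_div]; ring

/-- For `δ > 0`, `q ≥ 0` there is a constant `C > 0` depending only on `δ` and
`q` such that for all `T ≥ 1` and continuous `E` with `|E(t)| ≤ M(T+t)^(-q)` on `[0,∞)`, the
function `u(t) = ∫_0^t e^{δ(τ-t)} E(τ) dτ` solves `u' + δu = E` with `u(0) = 0` and obeys
`|u(t)| ≤ C·M·(T+t)^(-q)`. -/
theorem damped_scalar_ODE_polynomial_decay
    (δ q : ℝ) (hδ : 0 < δ) (hq : 0 ≤ q) :
    ∃ C : ℝ, 0 < C ∧
      ∀ T : ℝ, 1 ≤ T →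
      ∀ E : ℝ → ℝ, ContinuousOn E (Ici 0) →
      ∀ M : ℝ, 0 ≤ M →
        (∀ t ∈ Ici (0 : ℝ), |E t| ≤ M * (T + t) ^ (-q)) →
        ∀ u : ℝ → ℝ,
          (∀ t : ℝ, u t = ∫ τ in (0 : ℝ)..t, Real.exp (δ * (τ - t)) * E τ) →
          (∀ t ∈ Ici (0 : ℝ), ∃ d : ℝ,
            HasDerivWithinAt u d (Ici 0) t ∧ d + δ * u t = E t) ∧
          u 0 = 0 ∧
          (∀ t ∈ Ici (0 : ℝ), |u t| ≤ C * M * (T + t) ^ (-q)) := by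
  refine ⟨(1 + (q + 1) / δ) ^ q * ((q + 1) / δ), by positivity, ?_⟩
  intro T hT E hE M hM hEM u hu
  obtain rfl : u = fun t => ∫ τ in (0 : ℝ)..t, exp (δ * (τ - t)) * E τ := funext hu
  refine ⟨fun t ht => ⟨_, hasDerivWithinAt_integral_exp_mul_sub hE ht, by ring⟩,
    intervalIntegral.integral_same, fun t ht => abs_integral_exp_mul_sub_le hδ hq hT hM hEM ht⟩
end

section
/- Let (M, d) be a nonempty compact metric space and let μ be a finite Borel measure on M whose support is all of M. Fix α ∈ (0,1]. Then for every ε > 0 there exists a constant C = C(ε) > 0 such that for every continuous function f : M → ℝ with finite α-Hölder seminorm [f]_α := sup_{x ≠ y} |f(x) - f(y)| / d(x,y)^α, one has sup_{x ∈ M} |f(x)| ≤ C·(∫_M |f|² dμ)^(1/2) + ε·( sup_{x ∈ M} |f(x)| + [f]_α ). -/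
/-!
Balls of a fixed radius `r` have measure bounded below by some `m > 0` uniformly in their
centre (cover the compact space by finitely many balls of radius `r / 2`). If `f` is
`α`-Hölder with constant `H`, then `|f| ≥ |f x| - H r^α` on the ball of radius `r` about `x`,
so Chebyshev's inequality gives `(|f x| - H r^α)² m ≤ ∫ |f|²`. Choosing `r^α = ε` yields
`|f x| ≤ m^{-1/2} ‖f‖₂ + ε H` at every point.
-/

open MeasureTheory Metric

theorem exists_pos_forall_le_measureReal_ball {X : Type*} [PseudoMetricSpace X] [CompactSpace X]
    [MeasurableSpace X] (μ : Measure X) [IsFiniteMeasure μ] [μ.IsOpenPosMeasure]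
    {r : ℝ} (hr : 0 < r) : ∃ m > (0 : ℝ), ∀ x : X, m ≤ μ.real (ball x r) := by
  obtain ⟨t, -, htfin, hcover⟩ := finite_cover_balls_of_compact (isCompact_univ (X := X)) (half_pos hr)
  have := htfin.to_subtype
  obtain ⟨m, hm, hmt⟩ := Pi.exists_forall_pos_add_lt (x := 0)
    (y := fun i : t => μ.real (ball (i : X) (r / 2)))
    fun i => ENNReal.toReal_pos (measure_ball_pos μ _ (half_pos hr)).ne' (measure_ne_top μ _)
  refine ⟨m, hm, fun x => ?_⟩
  obtain ⟨i, hi, hxi⟩ := Set.mem_iUnion₂.1 (hcover (Set.mem_univ x))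
  have hsub : ball i (r / 2) ⊆ ball x r :=
    ball_subset_ball' (by linarith [mem_ball'.1 hxi])
  calc m ≤ μ.real (ball i (r / 2)) := by simpa using (hmt ⟨i, hi⟩).le
    _ ≤ μ.real (ball x r) := measureReal_mono hsub

theorem sq_mul_measureReal_le_integral_sq_abs {X : Type*} [MeasurableSpace X] {μ : Measure X}
    [IsFiniteMeasure μ] {f : X → ℝ} (hf : Integrable (fun x => |f x| ^ 2) μ) {s : Set X}
    {T : ℝ} (hT : 0 ≤ T) (hs : ∀ x ∈ s, T ≤ |f x|) :
    T ^ 2 * μ.real s ≤ ∫ x, |f x| ^ 2 ∂μ := by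
  have hsub : s ⊆ {x | T ^ 2 ≤ |f x| ^ 2} := fun x hx => pow_le_pow_left₀ hT (hs x hx) 2
  calc T ^ 2 * μ.real s ≤ T ^ 2 * μ.real {x | T ^ 2 ≤ |f x| ^ 2} :=
        mul_le_mul_of_nonneg_left (measureReal_mono hsub) (sq_nonneg T)
    _ ≤ ∫ x, |f x| ^ 2 ∂μ :=
        mul_meas_ge_le_integral_of_nonneg (Filter.Eventually.of_forall fun x => by positivity) hf _

theorem sub_le_abs_of_mem_ball_of_holder {X : Type*} [PseudoMetricSpace X] {f : X → ℝ}
    {H α r : ℝ} (hH : 0 ≤ H) (hα : 0 ≤ α) (hf : ∀ x y, |f x - f y| ≤ H * dist x y ^ α)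
    {x y : X} (hy : y ∈ ball x r) : |f x| - H * r ^ α ≤ |f y| := by
  have hdist : dist x y ^ α ≤ r ^ α :=
    Real.rpow_le_rpow dist_nonneg (mem_ball'.1 hy).le hα
  have := (abs_sub_abs_le_abs_sub (f x) (f y)).trans
    ((hf x y).trans (mul_le_mul_of_nonneg_left hdist hH))
  linarith

theorem abs_le_of_holder_of_le_measureReal_ball {X : Type*} [PseudoMetricSpace X]
    [MeasurableSpace X] {μ : Measure X} [IsFiniteMeasure μ] {f : X → ℝ}
    (hint : Integrable (fun x => |f x| ^ 2) μ) {H α r m : ℝ} (hH : 0 ≤ H) (hα : 0 ≤ α)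
    (hf : ∀ x y, |f x - f y| ≤ H * dist x y ^ α) (hm : 0 < m) {x : X}
    (hmx : m ≤ μ.real (ball x r)) :
    |f x| ≤ (√m)⁻¹ * √(∫ y, |f y| ^ 2 ∂μ) + H * r ^ α := by
  set T := |f x| - H * r ^ α
  rcases le_or_gt T 0 with hT | hT
  · have : 0 ≤ (√m)⁻¹ * √(∫ y, |f y| ^ 2 ∂μ) := by positivity
    linarith
  have hTsq : T ^ 2 * m ≤ ∫ y, |f y| ^ 2 ∂μ :=
    (mul_le_mul_of_nonneg_left hmx (sq_nonneg T)).trans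
      (sq_mul_measureReal_le_integral_sq_abs hint hT.le
        fun y hy => sub_le_abs_of_mem_ball_of_holder hH hα hf hy)
  have : T ≤ (√m)⁻¹ * √(∫ y, |f y| ^ 2 ∂μ) := by
    rw [← Real.sqrt_inv, ← Real.sqrt_mul (by positivity), ← Real.sqrt_sq hT.le]
    exact Real.sqrt_le_sqrt (by rw [inv_mul_eq_div, le_div_iff₀ hm]; linarith)
  linarith

theorem sup_bound_by_L2_and_Holder_general
    {M : Type*} [MetricSpace M] [CompactSpace M]
    [MeasurableSpace M] [BorelSpace M]
    (μ : Measure M) [IsFiniteMeasure μ] [μ.IsOpenPosMeasure]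
    (α : ℝ) (hα : α ∈ Set.Ioc (0 : ℝ) 1) :
    ∀ ε > (0 : ℝ), ∃ C > (0 : ℝ),
      ∀ f : M → ℝ, Continuous f →
      ∀ H : ℝ, 0 ≤ H →
        (∀ x y : M, |f x - f y| ≤ H * dist x y ^ α) →
        (⨆ x : M, |f x|) ≤
          C * (∫ x, |f x| ^ 2 ∂μ) ^ ((1 : ℝ) / 2) +
          ε * ((⨆ x : M, |f x|) + H) := by
  intro ε hε
  have hrα : (ε ^ α⁻¹) ^ α = ε := Real.rpow_inv_rpow hε.le hα.1.ne'
  obtain ⟨m, hm, hball⟩ := exists_pos_forall_le_measureReal_ball μ (r := ε ^ α⁻¹) (by positivity)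
  refine ⟨(√m)⁻¹, by positivity, fun f hf H hH hHol => ?_⟩
  have hint : Integrable (fun x => |f x| ^ 2) μ :=
    (hf.abs.pow 2).integrable_of_hasCompactSupport (.of_compactSpace _)
  have hpoint (x : M) : |f x| ≤ (√m)⁻¹ * √(∫ y, |f y| ^ 2 ∂μ) + ε * H := by
    simpa [hrα, mul_comm H] using
      abs_le_of_holder_of_le_measureReal_ball hint hH hα.1.le hHol hm (hball x)
  have hsup_nonneg : 0 ≤ ⨆ x, |f x| := Real.iSup_nonneg fun x => abs_nonneg _
  rw [← Real.sqrt_eq_rpow]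
  calc ⨆ x, |f x| ≤ (√m)⁻¹ * √(∫ y, |f y| ^ 2 ∂μ) + ε * H :=
        Real.iSup_le hpoint (by positivity)
    _ ≤ (√m)⁻¹ * √(∫ y, |f y| ^ 2 ∂μ) + ε * ((⨆ x, |f x|) + H) := by gcongr; linarith

/-- On a nonempty compact metric space with a finite Borel measure of full
support, for every `ε > 0` there is `C > 0` such that every continuous `α`-Hölder function
`f` satisfies `sup |f| ≤ C·‖f‖_{L²} + ε·(sup |f| + [f]_α)`; here the Hölder seminorm is
encoded by quantifying over all Hölder constants `H` of `f`. -/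
theorem sup_bound_by_L2_and_Holder
    {M : Type*} [MetricSpace M] [CompactSpace M] [Nonempty M]
    [MeasurableSpace M] [BorelSpace M]
    (μ : Measure M) [IsFiniteMeasure μ] [μ.IsOpenPosMeasure]
    (α : ℝ) (hα : α ∈ Set.Ioc (0 : ℝ) 1) :
    ∀ ε > (0 : ℝ), ∃ C > (0 : ℝ),
      ∀ f : M → ℝ, Continuous f →
      ∀ H : ℝ, 0 ≤ H →
        (∀ x y : M, |f x - f y| ≤ H * dist x y ^ α) →
        (⨆ x : M, |f x|) ≤
          C * (∫ x, |f x| ^ 2 ∂μ) ^ ((1 : ℝ) / 2) +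
          ε * ((⨆ x : M, |f x|) + H) :=
  sup_bound_by_L2_and_Holder_general μ α hα
end

section
/- Fix an integer n ≥ 3 and set N = 2n/(n-2). Let u : ℝ → ℝ be a twice continuously differentiable function with u(t) > 0 for all t, solving 4u''(t) - (n-2)² u(t) + n(n-2) u(t)^(N-1) = 0 for all t ∈ ℝ (where u(t)^(N-1) is the real power). Suppose u is periodic (there exists T > 0 with u(t+T) = u(t) for all t) and u is not constant. Then for every t ∈ ℝ one has 2u'(t)² + ((n-2)²/2)·(u(t)^N - u(t)²) < 0; in particular 0 < u(t) < 1 for all t. -/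
/-!
Along a solution the Hamiltonian `H = 2u'² + (a/2) g(u)`, `g(x) = x^N - x²`, is constant.
A non-constant periodic solution attains its minimum `m` and its maximum `M > m`, both with
`u' = 0`, so `g(m) = g(M)`. Since `g < 0` exactly on `(0, 1)` and `g` is strictly increasing on
`[1, ∞)`, this forces `g(m) < 0`; hence `H = (a/2) g(m) < 0` everywhere, and then `g(u) < 0`,
i.e. `u < 1`.
-/

open Set

namespace Real

theorem rpow_lt_sq_iff_lt_one {x N : ℝ} (hx : 0 < x) (hN : 2 < N) : x ^ N < x ^ 2 ↔ x < 1 := by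
  rw [← rpow_two]
  constructor
  · intro h
    by_contra! h1
    exact (rpow_le_rpow_of_exponent_le h1 hN.le).not_gt h
  · intro h1
    exact rpow_lt_rpow_of_exponent_gt hx h1 hN

theorem strictMonoOn_rpow_sub_sq {N : ℝ} (hN : 2 < N) :
    StrictMonoOn (fun x : ℝ => x ^ N - x ^ 2) (Ici 1) := by
  intro x (hx : 1 ≤ x) y _ hxy
  -- `x^N - x² = x² (x^(N-2) - 1)`, a product of increasing factors that are nonnegative here.
  have hsplit : ∀ z : ℝ, 0 < z → z ^ N = z ^ 2 * z ^ (N - 2) := fun z hz => by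
    rw [← rpow_two, ← rpow_add hz, add_sub_cancel]
  have hy1 : 1 < y ^ (N - 2) := one_lt_rpow (hx.trans_lt hxy) (by linarith)
  have hxy' : x ^ (N - 2) < y ^ (N - 2) := rpow_lt_rpow (by linarith) hxy (by linarith)
  have hsq : x ^ 2 < y ^ 2 := pow_lt_pow_left₀ hxy (by linarith) two_ne_zero
  simp only [hsplit x (by linarith), hsplit y (by linarith)]
  nlinarith [mul_le_mul_of_nonneg_left hxy'.le (sq_nonneg x),
    mul_lt_mul_of_pos_right hsq (by linarith : 0 < y ^ (N - 2) - 1)]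

theorem rpow_sub_sq_neg_of_eq {x y N : ℝ} (hx : 0 < x) (hxy : x < y) (hN : 2 < N)
    (heq : x ^ N - x ^ 2 = y ^ N - y ^ 2) : x ^ N - x ^ 2 < 0 := by
  by_contra! h
  have hx1 : 1 ≤ x := by
    by_contra! hx1
    linarith [(rpow_lt_sq_iff_lt_one hx hN).2 hx1]
  exact (strictMonoOn_rpow_sub_sq hN hx1 (hx1.trans hxy.le : (1 : ℝ) ≤ y) hxy).ne heq

end Real

namespace Function.Periodic

variable {f : ℝ → ℝ} {T : ℝ}

theorem exists_forall_le_of_continuous (hp : Periodic f T) (hT : T ≠ 0) (hf : Continuous f) :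
    ∃ b, ∀ t, f b ≤ f t := by
  obtain ⟨_, ⟨b, rfl⟩, hb⟩ := (hp.compact_of_continuous hT hf).exists_isLeast (range_nonempty f)
  exact ⟨b, fun t => hb (mem_range_self t)⟩

theorem exists_forall_ge_of_continuous (hp : Periodic f T) (hT : T ≠ 0) (hf : Continuous f) :
    ∃ a, ∀ t, f t ≤ f a := by
  obtain ⟨_, ⟨a, rfl⟩, ha⟩ := (hp.compact_of_continuous hT hf).exists_isGreatest (range_nonempty f)
  exact ⟨a, fun t => ha (mem_range_self t)⟩

end Function.Periodic

noncomputable def hamiltonian (a N x y : ℝ) : ℝ := 2 * y ^ 2 + a / 2 * (x ^ N - x ^ 2)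

theorem hamiltonian_zero_right (a N x : ℝ) : hamiltonian a N x 0 = a / 2 * (x ^ N - x ^ 2) := by
  simp [hamiltonian]

theorem lt_one_of_hamiltonian_neg {a N x y : ℝ} (ha : 0 < a) (hx : 0 < x) (hN : 2 < N)
    (h : hamiltonian a N x y < 0) : x < 1 := by
  rw [← Real.rpow_lt_sq_iff_lt_one hx hN]
  rw [hamiltonian] at h
  nlinarith [sq_nonneg y]

theorem hamiltonian_conserved {a b N : ℝ} (hab : a * N = 2 * b) {u : ℝ → ℝ}
    (hu : Differentiable ℝ u) (hu' : Differentiable ℝ (deriv u)) (hne : ∀ t, u t ≠ 0)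
    (hODE : ∀ t, 4 * deriv (deriv u) t - a * u t + b * u t ^ (N - 1) = 0) (s t : ℝ) :
    hamiltonian a N (u s) (deriv u s) = hamiltonian a N (u t) (deriv u t) := by
  have hderiv : ∀ t, HasDerivAt (fun s => hamiltonian a N (u s) (deriv u s)) 0 t := by
    intro t
    have hpow := (hu t).hasDerivAt.rpow_const (p := N) (Or.inl (hne t))
    have hsq := (hu t).hasDerivAt.pow 2
    have hvsq := (hu' t).hasDerivAt.pow 2
    refine ((hvsq.const_mul 2).add ((hpow.sub hsq).const_mul (a / 2))).congr_deriv ?_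
    push_cast
    linear_combination deriv u t * hODE t + u t ^ (N - 1) * deriv u t / 2 * hab
  exact is_const_of_deriv_eq_zero (fun t => (hderiv t).differentiableAt)
    (fun t => (hderiv t).deriv) s t

/-- For `n ≥ 3`, `N = 2n/(n-2)`, any positive non-constant periodic `C²`
solution of `4u'' - (n-2)²u + n(n-2)u^(N-1) = 0` has negative Hamiltonian:
`2u'(t)² + ((n-2)²/2)(u(t)^N - u(t)²) < 0` for all `t`; in particular `0 < u(t) < 1`. -/
theorem periodic_solution_negative_energy
    (n : ℕ) (hn : 3 ≤ n) (N : ℝ) (hN : N = 2 * (n : ℝ) / ((n : ℝ) - 2))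
    (u : ℝ → ℝ) (hreg : ContDiff ℝ 2 u) (hpos : ∀ t : ℝ, 0 < u t)
    (hODE : ∀ t : ℝ, 4 * deriv (deriv u) t - ((n : ℝ) - 2) ^ 2 * u t
        + (n : ℝ) * ((n : ℝ) - 2) * u t ^ (N - 1) = 0)
    (hper : ∃ T : ℝ, 0 < T ∧ Function.Periodic u T)
    (hnc : ∃ t₁ t₂ : ℝ, u t₁ ≠ u t₂) :
    ∀ t : ℝ,
      2 * (deriv u t) ^ 2 + (((n : ℝ) - 2) ^ 2 / 2) * (u t ^ N - u t ^ 2) < 0 ∧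
      0 < u t ∧ u t < 1 := by
  obtain ⟨T, hT, hperT⟩ := hper
  obtain ⟨t₁, t₂, hne⟩ := hnc
  have hn3 : (3 : ℝ) ≤ n := by exact_mod_cast hn
  have hn2 : (0 : ℝ) < n - 2 := by linarith
  have hN2 : 2 < N := by rw [hN, lt_div_iff₀ hn2]; linarith
  have hab : ((n : ℝ) - 2) ^ 2 * N = 2 * ((n : ℝ) * ((n : ℝ) - 2)) := by
    rw [hN]; field_simp
  have hH := hamiltonian_conserved hab (hreg.differentiable two_ne_zero)
    ((hreg.deriv' (n := 1)).differentiable one_ne_zero) (fun t => (hpos t).ne') hODE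
  obtain ⟨b, hmin⟩ := hperT.exists_forall_le_of_continuous hT.ne' hreg.continuous
  obtain ⟨a, hmax⟩ := hperT.exists_forall_ge_of_continuous hT.ne' hreg.continuous
  have hda : deriv u a = 0 := IsLocalMax.deriv_eq_zero (Filter.Eventually.of_forall hmax)
  have hdb : deriv u b = 0 := IsLocalMin.deriv_eq_zero (Filter.Eventually.of_forall hmin)
  have hmM : u b < u a := by
    by_contra! h
    exact hne (by linarith [hmin t₁, hmax t₁, hmin t₂, hmax t₂])
  have hc : (0 : ℝ) < ((n : ℝ) - 2) ^ 2 / 2 := by positivity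
  have hlevel : u b ^ N - u b ^ 2 = u a ^ N - u a ^ 2 := by
    have := hH b a
    rw [hda, hdb, hamiltonian_zero_right, hamiltonian_zero_right] at this
    exact mul_left_cancel₀ hc.ne' this
  have hneg := Real.rpow_sub_sq_neg_of_eq (hpos b) hmM hN2 hlevel
  intro t
  have hHt : hamiltonian (((n : ℝ) - 2) ^ 2) N (u t) (deriv u t) < 0 := by
    rw [hH t b, hdb, hamiltonian_zero_right]
    exact mul_neg_of_pos_of_neg hc hneg
  exact ⟨hHt, hpos t, lt_one_of_hamiltonian_neg (by positivity) (hpos t) hN2 hHt⟩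
end

section
/- Fix an integer n ≥ 3, set N = 2n/(n-2) and u₀ = ((n-2)/n)^((n-2)/4). For α ∈ (u₀, 1), let u_α : ℝ → ℝ be the unique solution of 4u'' - (n-2)²u + n(n-2)u^(N-1) = 0 with u_α(0) = α, u_α'(0) = 0; u_α is a positive, non-constant, periodic function, and let τ(α) denote its minimal positive period. Then the function τ : (u₀, 1) → (0,∞) is continuous. -/
/-!
Write the equation as `u'' = f u` with `f y = a y - b y ^ p`, where `a = (n - 2)² / 4`,
`b = n (n - 2) / 4` and `p = N - 1 > 1`; its equilibrium is `u₀` and `f` is Lipschitz on `[0, 1]`.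
Conservation of `u'² - 2 P(u)`, with `P' = f`, keeps `u_α` between `0` and `α`, and uniqueness for
the equivalent first-order system makes `u_α` symmetric about each of its critical points, so that
a critical point `c > 0` yields the period `2c`. By minimality of `τ(α)`, therefore,
`u_α'(τ(α)/2) = 0` and `u_α' < 0` on `(0, τ(α)/2)`; the energy then puts `u_α(τ(α)/2)` below `u₀`,
so that `u_α'' = f(u_α) > 0` there.

By Gronwall, `u_α'` and `u_α''` converge to `u_β'` and `u_β''` uniformly on compact time
intervals as `α → β`. The strict negativity of `u_β'` on `(0, τ(β)/2 - ε]` therefore persists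
for `α` near `β` (near `t = 0` through `u_β''(0) = f(β) < 0`), which gives `τ(α) > τ(β) - 2ε`;
and since `u_β'` changes sign transversally at `τ(β)/2`, `u_α'` is positive somewhere before
`τ(β)/2 + ε`, which gives `τ(α) < τ(β) + 2ε`.
-/

open Set Filter Topology Real
open scoped NNReal

theorem HasDerivAt.eventually_nhdsGT_lt {g : ℝ → ℝ} {x d : ℝ} (hg : HasDerivAt g d x)
    (hd : 0 < d) : ∀ᶠ y in 𝓝[>] x, g x < g y := by
  have hslope := (hasDerivAt_iff_tendsto_slope.mp hg).mono_left (nhdsGT_le_nhdsNE x)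
  filter_upwards [hslope.eventually (lt_mem_nhds hd), self_mem_nhdsWithin] with y hy hxy
  rw [slope_def_field] at hy
  exact sub_pos.1 ((div_pos_iff_of_pos_right (sub_pos.2 hxy)).1 hy)

theorem TendstoUniformlyOn.eventually_forall_neg {ι X : Type*} [TopologicalSpace X]
    {l : Filter ι} {G : ι → X → ℝ} {g : X → ℝ} {S : Set X} (h : TendstoUniformlyOn G g l S)
    (hS : IsCompact S) (hg : ContinuousOn g S) (hneg : ∀ x ∈ S, g x < 0) :
    ∀ᶠ i in l, ∀ x ∈ S, G i x < 0 := by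
  rcases S.eq_empty_or_nonempty with rfl | hne
  · simp
  obtain ⟨x₀, hx₀, hmax⟩ := hS.exists_isMaxOn hne hg
  filter_upwards [Metric.tendstoUniformlyOn_iff.mp h _ (neg_pos.2 (hneg x₀ hx₀))] with i hi x hx
  have hclose := (abs_lt.mp ((Real.dist_eq _ _).symm.trans_lt (hi x hx))).1
  linarith [show g x ≤ g x₀ from hmax hx]

theorem eventually_forall_Ioc_neg {ι : Type*} {l : Filter ι} {G : ι → ℝ → ℝ} {g : ℝ → ℝ}
    {a : ℝ} (hG0 : ∀ᶠ i in l, G i 0 = 0 ∧ Differentiable ℝ (G i)) (hg : Continuous g)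
    (hg' : Continuous (deriv g)) (hg'0 : deriv g 0 < 0) (hneg : ∀ t ∈ Ioc 0 a, g t < 0)
    (hG : TendstoUniformlyOn G g l (Icc 0 a))
    (hG' : TendstoUniformlyOn (fun i => deriv (G i)) (deriv g) l (Icc 0 a)) :
    ∀ᶠ i in l, ∀ t ∈ Ioc 0 a, G i t < 0 := by
  rcases le_or_gt a 0 with ha | ha
  · exact Eventually.of_forall fun i t ht => absurd (ht.1.trans_le ht.2) ha.not_gt
  obtain ⟨ε, hε, hball⟩ :=
    Metric.eventually_nhds_iff.mp (hg'.continuousAt.eventually (gt_mem_nhds hg'0))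
  set ρ := min (ε / 2) a
  have hρ : 0 < ρ := lt_min (half_pos hε) ha
  have hρneg : ∀ t ∈ Icc 0 ρ, deriv g t < 0 := fun t ht => hball <| by
    rw [Real.dist_eq, sub_zero, abs_of_nonneg ht.1]
    linarith [ht.2.trans (min_le_left _ _)]
  filter_upwards [hG0,
    (hG'.mono (Icc_subset_Icc_right (min_le_right _ _))).eventually_forall_neg isCompact_Icc
      hg'.continuousOn hρneg,
    (hG.mono (Icc_subset_Icc_left hρ.le)).eventually_forall_neg isCompact_Icc hg.continuousOn
      fun t ht => hneg t ⟨hρ.trans_le ht.1, ht.2⟩] with i ⟨h0, hdiff⟩ hderiv hfar t ht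
  rcases le_or_gt t ρ with htρ | htρ
  · have hanti : StrictAntiOn (G i) (Icc 0 ρ) :=
      strictAntiOn_of_deriv_neg (convex_Icc 0 ρ) hdiff.continuous.continuousOn
        fun x hx => hderiv x (interior_subset hx)
    simpa [h0] using hanti ⟨le_rfl, hρ.le⟩ ⟨ht.1.le, htρ⟩ ht.1
  · exact hfar t ⟨htρ.le, ht.2⟩

namespace AutonomousODE

variable {f : ℝ → ℝ}

def IsSolution (f u : ℝ → ℝ) : Prop :=
  ContDiff ℝ 2 u ∧ ∀ t, deriv (deriv u) t = f (u t)

noncomputable def phase (u : ℝ → ℝ) (t : ℝ) : ℝ × ℝ := (u t, deriv u t)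

def field (f : ℝ → ℝ) (p : ℝ × ℝ) : ℝ × ℝ := (p.2, f p.1)

theorem lipschitzOnWith_field {K : ℝ≥0} {s : Set ℝ} (hf : LipschitzOnWith K f s) :
    LipschitzOnWith (max 1 K) (field f) (s ×ˢ univ) := by
  have hfst : LipschitzOnWith (K * 1) (f ∘ Prod.fst) (s ×ˢ (univ : Set ℝ)) :=
    hf.comp LipschitzWith.prod_fst.lipschitzOnWith fun p hp => hp.1
  rw [mul_one] at hfst
  exact LipschitzWith.prod_snd.lipschitzOnWith.prodMk hfst

namespace IsSolution

variable {u v w : ℝ → ℝ}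

theorem contDiff_deriv (hu : IsSolution f u) : ContDiff ℝ 1 (deriv u) :=
  (contDiff_succ_iff_deriv.mp hu.1).2.2

theorem differentiable (hu : IsSolution f u) : Differentiable ℝ u :=
  hu.1.differentiable (by norm_num)

theorem continuous_deriv (hu : IsSolution f u) : Continuous (deriv u) :=
  hu.contDiff_deriv.continuous

theorem continuous_deriv_deriv (hu : IsSolution f u) : Continuous (deriv (deriv u)) :=
  hu.contDiff_deriv.continuous_deriv le_rfl

theorem hasDerivAt_deriv (hu : IsSolution f u) (t : ℝ) : HasDerivAt (deriv u) (f (u t)) t :=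
  hu.2 t ▸ (hu.contDiff_deriv.differentiable one_ne_zero t).hasDerivAt

theorem hasDerivAt_phase (hu : IsSolution f u) (t : ℝ) :
    HasDerivAt (phase u) (field f (phase u t)) t :=
  (hu.differentiable t).hasDerivAt.prodMk (hu.hasDerivAt_deriv t)

theorem comp_const_sub (hu : IsSolution f u) (c : ℝ) : IsSolution f (fun t => u (c - t)) := by
  have hd : deriv (fun t => u (c - t)) = fun t => -deriv u (c - t) :=
    funext fun t => deriv_comp_const_sub ..
  refine ⟨hu.1.comp (contDiff_const.sub contDiff_id), fun t => ?_⟩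
  rw [hd, deriv.fun_neg, deriv_comp_const_sub, neg_neg, hu.2]

theorem deriv_sq_sub_eq {P : ℝ → ℝ} (hu : IsSolution f u) (hP : ∀ y, HasDerivAt P (f y) y)
    (t : ℝ) : deriv u t ^ 2 - 2 * P (u t) = deriv u 0 ^ 2 - 2 * P (u 0) := by
  have hE : ∀ s, HasDerivAt (fun t => deriv u t ^ 2 - 2 * P (u t)) 0 s := fun s => by
    have := ((hu.hasDerivAt_deriv s).fun_pow 2).fun_sub
      (((hP (u s)).comp s (hu.differentiable s).hasDerivAt).const_mul 2)
    refine this.congr_deriv ?_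
    push_cast
    ring
  exact is_const_of_deriv_eq_zero (fun s => (hE s).differentiableAt) (fun s => (hE s).deriv) t 0

section Lipschitz

variable {K : ℝ≥0} {s : Set ℝ}

theorem phase_eq (hf : LipschitzOnWith K f s) (hv : IsSolution f v) (hw : IsSolution f w)
    (hvs : ∀ t, v t ∈ s) (hws : ∀ t, w t ∈ s) {t₀ : ℝ} (h : phase v t₀ = phase w t₀) :
    phase v = phase w :=
  ODE_solution_unique_univ (v := fun _ => field f) (s := fun _ => s ×ˢ univ)
    (fun _ => lipschitzOnWith_field hf) (fun t => ⟨hv.hasDerivAt_phase t, hvs t, trivial⟩)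
    (fun t => ⟨hw.hasDerivAt_phase t, hws t, trivial⟩) h

theorem dist_phase_le (hf : LipschitzOnWith K f s) (hv : IsSolution f v) (hw : IsSolution f w)
    (hvs : ∀ t, v t ∈ s) (hws : ∀ t, w t ∈ s) {t : ℝ} (ht : 0 ≤ t) :
    dist (phase v t) (phase w t) ≤ dist (phase v 0) (phase w 0) * exp (max 1 K * t) := by
  have := dist_le_of_trajectories_ODE_of_mem (v := fun _ => field f) (s := fun _ => s ×ˢ univ)
    (fun _ _ => lipschitzOnWith_field hf)
    (fun t _ => (hv.hasDerivAt_phase t).continuousAt.continuousWithinAt)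
    (fun t _ => (hv.hasDerivAt_phase t).hasDerivWithinAt) (fun t _ => ⟨hvs t, trivial⟩)
    (fun t _ => (hw.hasDerivAt_phase t).continuousAt.continuousWithinAt)
    (fun t _ => (hw.hasDerivAt_phase t).hasDerivWithinAt) (fun t _ => ⟨hws t, trivial⟩) le_rfl
    t ⟨ht, le_rfl⟩
  simpa using this

theorem apply_two_mul_sub_of_deriv_eq_zero (hf : LipschitzOnWith K f s) (hu : IsSolution f u)
    (hus : ∀ t, u t ∈ s) {c : ℝ} (hc : deriv u c = 0) (t : ℝ) : u (2 * c - t) = u t := by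
  have h := hu.phase_eq hf (hu.comp_const_sub (2 * c)) hus (fun t => hus _) (t₀ := c) <| by
    simp [phase, deriv_comp_const_sub, hc, show 2 * c - c = c by ring]
  exact (congrArg Prod.fst (congrFun h t)).symm

theorem periodic_two_mul_of_deriv_eq_zero (hf : LipschitzOnWith K f s) (hu : IsSolution f u)
    (hus : ∀ t, u t ∈ s) (h0 : deriv u 0 = 0) {c : ℝ} (hc : deriv u c = 0) :
    Function.Periodic u (2 * c) := fun t => by
  rw [← hu.apply_two_mul_sub_of_deriv_eq_zero hf hus hc,
    ← hu.apply_two_mul_sub_of_deriv_eq_zero hf hus h0 t]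
  congr 1
  ring

theorem deriv_half_period (hf : LipschitzOnWith K f s) (hu : IsSolution f u)
    (hus : ∀ t, u t ∈ s) (h0 : deriv u 0 = 0) (hf0 : f (u 0) < 0) {T : ℝ}
    (hT : IsLeast {T | 0 < T ∧ Function.Periodic u T} T) :
    deriv u (T / 2) = 0 ∧ ∀ t ∈ Ioo 0 (T / 2), deriv u t < 0 := by
  obtain ⟨⟨hT0, hper⟩, hmin⟩ := hT
  have hsymm : (fun t => u (T - t)) = u := funext fun t => by
    rw [sub_eq_neg_add, hper, ← hu.apply_two_mul_sub_of_deriv_eq_zero hf hus h0, mul_zero,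
      zero_sub, neg_neg]
  have hcrit : deriv u (T / 2) = 0 := by
    have h := deriv_comp_const_sub (f := u) (a := T) (x := T / 2)
    rw [hsymm, show T - T / 2 = T / 2 by ring] at h
    linarith
  have hne : ∀ t ∈ Ioo 0 (T / 2), deriv u t ≠ 0 := fun t ht hzero => by
    linarith [ht.2, hmin ⟨by linarith [ht.1], hu.periodic_two_mul_of_deriv_eq_zero hf hus h0 hzero⟩]
  obtain ⟨t₁, ht₁, hneg₁⟩ : ∃ t ∈ Ioo 0 (T / 2), deriv u t < 0 := by
    have hdec := (hu.hasDerivAt_deriv 0).neg.eventually_nhdsGT_lt (neg_pos.2 hf0)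
    obtain ⟨t, hlt, ht⟩ := (hdec.and (Ioo_mem_nhdsGT (half_pos hT0))).exists
    exact ⟨t, ht, by simpa [h0] using hlt⟩
  refine ⟨hcrit, fun t ht => ?_⟩
  by_contra! hge
  obtain ⟨c, hc, hc0⟩ := isPreconnected_Ioo.intermediate_value ht₁ ht
    hu.continuous_deriv.continuousOn ⟨hneg₁.le, hge⟩
  exact hne c hc hc0

end Lipschitz

end IsSolution

section Family

variable {K : ℝ≥0} {s U : Set ℝ} {u : ℝ → ℝ → ℝ} {α₀ : ℝ}

theorem tendstoUniformlyOn_phase (hf : LipschitzOnWith K f s)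
    (hu : ∀ α ∈ U, IsSolution f (u α)) (hus : ∀ α ∈ U, ∀ t, u α t ∈ s)
    (hu0 : ∀ α ∈ U, phase (u α) 0 = (α, 0)) (hα₀ : α₀ ∈ U) (b : ℝ) :
    TendstoUniformlyOn (fun α => phase (u α)) (phase (u α₀)) (𝓝[U] α₀) (Icc 0 b) := by
  rw [Metric.tendstoUniformlyOn_iff]
  intro ε hε
  have hC : 0 < exp (max 1 K * b) := exp_pos _
  filter_upwards [self_mem_nhdsWithin,
    nhdsWithin_le_nhds (Metric.ball_mem_nhds α₀ (div_pos hε hC))] with α hα hball t ht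
  calc dist (phase (u α₀) t) (phase (u α) t)
      ≤ dist (phase (u α₀) 0) (phase (u α) 0) * exp (max 1 K * t) :=
        (hu α₀ hα₀).dist_phase_le hf (hu α hα) (hus α₀ hα₀) (hus α hα) ht.1
    _ ≤ dist α α₀ * exp (max 1 K * b) := by
        rw [hu0 α₀ hα₀, hu0 α hα, Prod.dist_eq, dist_self, max_eq_left dist_nonneg, dist_comm]
        gcongr
        exact ht.2
    _ < ε := (lt_div_iff₀ hC).1 hball

theorem tendstoUniformlyOn_deriv (hf : LipschitzOnWith K f s)
    (hu : ∀ α ∈ U, IsSolution f (u α)) (hus : ∀ α ∈ U, ∀ t, u α t ∈ s)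
    (hu0 : ∀ α ∈ U, phase (u α) 0 = (α, 0)) (hα₀ : α₀ ∈ U) (b : ℝ) :
    TendstoUniformlyOn (fun α => deriv (u α)) (deriv (u α₀)) (𝓝[U] α₀) (Icc 0 b) :=
  uniformContinuous_snd.comp_tendstoUniformlyOn (tendstoUniformlyOn_phase hf hu hus hu0 hα₀ b)

theorem tendstoUniformlyOn_deriv_deriv (hf : LipschitzOnWith K f s)
    (hu : ∀ α ∈ U, IsSolution f (u α)) (hus : ∀ α ∈ U, ∀ t, u α t ∈ s)
    (hu0 : ∀ α ∈ U, phase (u α) 0 = (α, 0)) (hα₀ : α₀ ∈ U) (b : ℝ) :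
    TendstoUniformlyOn (fun α => deriv (deriv (u α))) (deriv (deriv (u α₀))) (𝓝[U] α₀)
      (Icc 0 b) := by
  have hval : TendstoUniformlyOn u (u α₀) (𝓝[U] α₀) (Icc 0 b) :=
    uniformContinuous_fst.comp_tendstoUniformlyOn (tendstoUniformlyOn_phase hf hu hus hu0 hα₀ b)
  have hf_val := hf.uniformContinuousOn.comp_tendstoUniformlyOn_eventually
    (eventually_nhdsWithin_of_forall fun α hα t _ => hus α hα t) (fun t _ => hus α₀ hα₀ t) hval
  rw [show deriv (deriv (u α₀)) = fun t => f (u α₀ t) from funext (hu α₀ hα₀).2]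
  exact hf_val.congr (eventually_nhdsWithin_of_forall fun α hα t _ => ((hu α hα).2 t).symm)

theorem continuousOn_of_isLeast_period {τ : ℝ → ℝ} (hf : LipschitzOnWith K f s)
    (hu : ∀ α ∈ U, IsSolution f (u α)) (hus : ∀ α ∈ U, ∀ t, u α t ∈ s)
    (hu0 : ∀ α ∈ U, phase (u α) 0 = (α, 0)) (hfU : ∀ α ∈ U, f α < 0)
    (hτ : ∀ α ∈ U, IsLeast {T | 0 < T ∧ Function.Periodic (u α) T} (τ α))
    (hturn : ∀ α ∈ U, 0 < f (u α (τ α / 2))) :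
    ContinuousOn τ U := by
  have hstart : ∀ α ∈ U, u α 0 = α ∧ deriv (u α) 0 = 0 := fun α hα =>
    Prod.ext_iff.mp (hu0 α hα)
  have hhalf : ∀ α ∈ U, deriv (u α) (τ α / 2) = 0 ∧ ∀ t ∈ Ioo 0 (τ α / 2), deriv (u α) t < 0 :=
    fun α hα => (hu α hα).deriv_half_period hf (hus α hα) (hstart α hα).2
      (by rw [(hstart α hα).1]; exact hfU α hα) (hτ α hα)
  intro α₀ hα₀
  have hU : ∀ᶠ α in 𝓝[U] α₀, α ∈ U := self_mem_nhdsWithin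
  refine tendsto_order.2 ⟨fun c hc => ?_, fun c hc => ?_⟩
  · have hneg := eventually_forall_Ioc_neg (a := c / 2)
      (hU.mono fun α hα =>
        ⟨(hstart α hα).2, (hu α hα).contDiff_deriv.differentiable one_ne_zero⟩)
      (hu α₀ hα₀).continuous_deriv (hu α₀ hα₀).continuous_deriv_deriv
      (by rw [(hu α₀ hα₀).2, (hstart α₀ hα₀).1]; exact hfU α₀ hα₀)
      (fun t ht => (hhalf α₀ hα₀).2 t ⟨ht.1, by linarith [ht.2]⟩)
      (tendstoUniformlyOn_deriv hf hu hus hu0 hα₀ _)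
      (tendstoUniformlyOn_deriv_deriv hf hu hus hu0 hα₀ _)
    filter_upwards [hneg, hU] with α hneg hα
    by_contra! hle
    exact (hneg _ ⟨half_pos (hτ α hα).1.1, by linarith⟩).ne (hhalf α hα).1
  · obtain ⟨t, hpos, ht⟩ := (((hu α₀ hα₀).hasDerivAt_deriv _).eventually_nhdsGT_lt
      (hturn α₀ hα₀) |>.and (Ioo_mem_nhdsGT (by linarith : τ α₀ / 2 < c / 2))).exists
    rw [(hhalf α₀ hα₀).1] at hpos
    have hconv := ((tendstoUniformlyOn_deriv hf hu hus hu0 hα₀ t).tendsto_at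
      ⟨by linarith [ht.1, (hτ α₀ hα₀).1.1], le_rfl⟩).eventually (lt_mem_nhds hpos)
    filter_upwards [hconv, hU] with α hposα hα
    by_contra! hle
    exact hposα.not_gt
      ((hhalf α hα).2 t ⟨by linarith [ht.1, (hτ α₀ hα₀).1.1], by linarith [ht.2]⟩)

end Family

end AutonomousODE

namespace PowerForce

open AutonomousODE

variable {a b p : ℝ}

noncomputable def force (a b p y : ℝ) : ℝ := a * y - b * y ^ p

noncomputable def potential (a b p y : ℝ) : ℝ := a * y ^ 2 / 2 - b * y ^ (p + 1) / (p + 1)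

noncomputable def equilibrium (a b p : ℝ) : ℝ := (a / b) ^ (p - 1)⁻¹

theorem contDiff_force (hp : 1 ≤ p) : ContDiff ℝ 1 (force a b p) :=
  (contDiff_const.mul contDiff_id).sub
    (contDiff_const.mul (contDiff_rpow_const_of_le (by exact_mod_cast hp)))

theorem hasDerivAt_potential (hp : 0 ≤ p) (y : ℝ) :
    HasDerivAt (potential a b p) (force a b p y) y := by
  have hrpow := hasDerivAt_rpow_const (x := y) (p := p + 1) (Or.inr (by linarith))
  refine ((((hasDerivAt_pow 2 y).const_mul a).div_const 2).sub
    ((hrpow.const_mul b).div_const (p + 1))).congr_deriv ?_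
  rw [force, add_sub_cancel_right]
  field_simp
  ring

theorem equilibrium_pos (ha : 0 < a) (hb : 0 < b) : 0 < equilibrium a b p :=
  rpow_pos_of_pos (div_pos ha hb) _

theorem equilibrium_rpow_sub_one (ha : 0 < a) (hb : 0 < b) (hp : 1 < p) :
    equilibrium a b p ^ (p - 1) = a / b := by
  rw [equilibrium, ← rpow_mul (div_pos ha hb).le, inv_mul_cancel₀ (sub_ne_zero.2 hp.ne'),
    rpow_one]

theorem force_eq_mul (hb : 0 < b) {y : ℝ} (hy : 0 < y) :
    force a b p y = b * y * (a / b - y ^ (p - 1)) := by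
  rw [force, rpow_sub_one hy.ne']
  field_simp

theorem force_pos (ha : 0 < a) (hb : 0 < b) (hp : 1 < p) {y : ℝ} (hy : 0 < y)
    (hyq : y < equilibrium a b p) : 0 < force a b p y := by
  rw [force_eq_mul hb hy, ← equilibrium_rpow_sub_one ha hb hp]
  have := rpow_lt_rpow hy.le hyq (sub_pos.2 hp)
  have := mul_pos hb hy
  nlinarith

theorem force_neg (ha : 0 < a) (hb : 0 < b) (hp : 1 < p) {y : ℝ}
    (hyq : equilibrium a b p < y) : force a b p y < 0 := by
  have hy := (equilibrium_pos ha hb).trans hyq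
  rw [force_eq_mul hb hy, ← equilibrium_rpow_sub_one ha hb hp]
  have := rpow_lt_rpow (equilibrium_pos ha hb).le hyq (sub_pos.2 hp)
  have := mul_pos hb hy
  nlinarith

theorem strictAntiOn_potential (ha : 0 < a) (hb : 0 < b) (hp : 1 < p) :
    StrictAntiOn (potential a b p) (Ici (equilibrium a b p)) := by
  have hP := hasDerivAt_potential (a := a) (b := b) (zero_lt_one.trans hp).le
  refine strictAntiOn_of_deriv_neg (convex_Ici _)
    (fun y _ => (hP y).continuousAt.continuousWithinAt) fun y hy => ?_
  rw [interior_Ici] at hy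
  exact (hP y).deriv ▸ force_neg ha hb hp hy

section Solution

variable {u : ℝ → ℝ}

theorem potential_eq_add_deriv_sq (hp : 0 ≤ p) (hu : IsSolution (force a b p) u)
    (h0 : deriv u 0 = 0) (t : ℝ) :
    potential a b p (u t) = potential a b p (u 0) + deriv u t ^ 2 / 2 := by
  have := hu.deriv_sq_sub_eq (hasDerivAt_potential hp) t
  rw [h0] at this
  linarith

variable (ha : 0 < a) (hb : 0 < b) (hp : 1 < p)
  (hu : IsSolution (force a b p) u) (h0 : deriv u 0 = 0) (hq : equilibrium a b p < u 0)
include ha hb hp hu h0 hq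

theorem le_initial (t : ℝ) : u t ≤ u 0 := by
  by_contra! hlt
  have hanti := strictAntiOn_potential ha hb hp hq.le (hq.trans hlt).le hlt
  linarith [potential_eq_add_deriv_sq (zero_lt_one.trans hp).le hu h0 t, sq_nonneg (deriv u t)]

theorem lt_equilibrium_of_deriv_eq_zero {c : ℝ} (hc : deriv u c = 0) (hlt : u c < u 0) :
    u c < equilibrium a b p := by
  by_contra! hge
  have hanti := strictAntiOn_potential ha hb hp hge hq.le hlt
  have := potential_eq_add_deriv_sq (zero_lt_one.trans hp).le hu h0 c
  rw [hc] at this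
  linarith

end Solution

theorem continuousOn_isLeast_period (ha : 0 < a) (hb : 0 < b) (hp : 1 < p) {M : ℝ}
    {u : ℝ → ℝ → ℝ} {τ : ℝ → ℝ}
    (hu : ∀ α ∈ Ioo (equilibrium a b p) M, IsSolution (force a b p) (u α))
    (hu0 : ∀ α ∈ Ioo (equilibrium a b p) M, phase (u α) 0 = (α, 0))
    (hpos : ∀ α ∈ Ioo (equilibrium a b p) M, ∀ t, 0 < u α t)
    (hτ : ∀ α ∈ Ioo (equilibrium a b p) M,
      IsLeast {T | 0 < T ∧ Function.Periodic (u α) T} (τ α)) :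
    ContinuousOn τ (Ioo (equilibrium a b p) M) := by
  obtain ⟨K, hK⟩ := (contDiff_force (a := a) (b := b) hp.le).contDiffOn.exists_lipschitzOnWith
    one_ne_zero (convex_Icc 0 M) isCompact_Icc
  have hstart : ∀ α ∈ Ioo (equilibrium a b p) M, u α 0 = α ∧ deriv (u α) 0 = 0 :=
    fun α hα => Prod.ext_iff.mp (hu0 α hα)
  have hq : ∀ α ∈ Ioo (equilibrium a b p) M, equilibrium a b p < u α 0 ∧ u α 0 < M :=
    fun α hα => by rw [(hstart α hα).1]; exact hα
  have hus : ∀ α ∈ Ioo (equilibrium a b p) M, ∀ t, u α t ∈ Icc 0 M := fun α hα t =>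
    ⟨(hpos α hα t).le,
      (le_initial ha hb hp (hu α hα) (hstart α hα).2 (hq α hα).1 t).trans (hq α hα).2.le⟩
  refine continuousOn_of_isLeast_period hK hu hus hu0 (fun α hα => force_neg ha hb hp hα.1)
    hτ fun α hα => ?_
  obtain ⟨hcrit, hneg⟩ := (hu α hα).deriv_half_period hK (hus α hα) (hstart α hα).2
    (force_neg ha hb hp (hq α hα).1) (hτ α hα)
  have hT := half_pos (hτ α hα).1.1
  have hdesc : u α (τ α / 2) < u α 0 :=
    strictAntiOn_of_deriv_neg (convex_Icc 0 (τ α / 2))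
      (hu α hα).differentiable.continuous.continuousOn
      (fun t ht => hneg t (by rwa [interior_Icc] at ht)) ⟨le_rfl, hT.le⟩ ⟨hT.le, le_rfl⟩ hT
  exact force_pos ha hb hp (hpos α hα _)
    (lt_equilibrium_of_deriv_eq_zero ha hb hp (hu α hα) (hstart α hα).2 (hq α hα).1 hcrit hdesc)

end PowerForce

theorem period_function_continuous_general
    (n : ℕ) (hn : 3 ≤ n) (N : ℝ) (hN : N = 2 * (n : ℝ) / ((n : ℝ) - 2))
    (u₀ : ℝ) (hu₀ : u₀ = (((n : ℝ) - 2) / (n : ℝ)) ^ (((n : ℝ) - 2) / 4))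
    (u : ℝ → ℝ → ℝ) (τ : ℝ → ℝ)
    (hsol : ∀ α ∈ Ioo u₀ 1,
      ContDiff ℝ 2 (u α) ∧ u α 0 = α ∧ deriv (u α) 0 = 0 ∧
      ∀ t : ℝ, 4 * deriv (deriv (u α)) t - ((n : ℝ) - 2) ^ 2 * u α t
          + (n : ℝ) * ((n : ℝ) - 2) * u α t ^ (N - 1) = 0)
    (hpos : ∀ α ∈ Ioo u₀ 1, ∀ t : ℝ, 0 < u α t)
    (hτ : ∀ α ∈ Ioo u₀ 1,
      0 < τ α ∧ Function.Periodic (u α) (τ α) ∧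
      ∀ T : ℝ, 0 < T → Function.Periodic (u α) T → τ α ≤ T) :
    ContinuousOn τ (Ioo u₀ 1) := by
  have hc : 0 < (n : ℝ) - 2 := by
    have : (3 : ℝ) ≤ n := by exact_mod_cast hn
    linarith
  have hp : 1 < N - 1 := by
    rw [hN, lt_sub_iff_add_lt, lt_div_iff₀ hc]
    linarith
  have hq : u₀ = PowerForce.equilibrium (((n : ℝ) - 2) ^ 2 / 4) ((n : ℝ) * ((n : ℝ) - 2) / 4)
      (N - 1) := by
    rw [hu₀, PowerForce.equilibrium, hN]
    congr 1
    · field_simp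
    · field_simp
      ring
  subst hq
  refine PowerForce.continuousOn_isLeast_period (by positivity) (by positivity) hp
    (fun α hα => ⟨(hsol α hα).1, fun t => ?_⟩) (fun α hα => ?_) hpos
    fun α hα => ⟨⟨(hτ α hα).1, (hτ α hα).2.1⟩, fun T hT => (hτ α hα).2.2 T hT.1 hT.2⟩
  · rw [PowerForce.force]
    linarith [(hsol α hα).2.2.2 t]
  · simp [AutonomousODE.phase, (hsol α hα).2.1, (hsol α hα).2.2.1]

/-- For `n ≥ 3`, `N = 2n/(n-2)`, `u₀ = ((n-2)/n)^((n-2)/4)`, and the family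
`u_α` of positive non-constant periodic solutions of `4u'' - (n-2)²u + n(n-2)u^(N-1) = 0`
with `u_α(0) = α`, `u_α'(0) = 0` for `α ∈ (u₀,1)`, the minimal positive period `τ(α)` is a
continuous function of `α` on `(u₀,1)`. -/
theorem period_function_continuous
    (n : ℕ) (hn : 3 ≤ n) (N : ℝ) (hN : N = 2 * (n : ℝ) / ((n : ℝ) - 2))
    (u₀ : ℝ) (hu₀ : u₀ = (((n : ℝ) - 2) / (n : ℝ)) ^ (((n : ℝ) - 2) / 4))
    (u : ℝ → ℝ → ℝ) (τ : ℝ → ℝ)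
    (hsol : ∀ α ∈ Ioo u₀ 1,
      ContDiff ℝ 2 (u α) ∧ u α 0 = α ∧ deriv (u α) 0 = 0 ∧
      ∀ t : ℝ, 4 * deriv (deriv (u α)) t - ((n : ℝ) - 2) ^ 2 * u α t
          + (n : ℝ) * ((n : ℝ) - 2) * u α t ^ (N - 1) = 0)
    (hpos : ∀ α ∈ Ioo u₀ 1, ∀ t : ℝ, 0 < u α t)
    (hnc : ∀ α ∈ Ioo u₀ 1, ∃ t₁ t₂ : ℝ, u α t₁ ≠ u α t₂)
    (hτ : ∀ α ∈ Ioo u₀ 1,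
      0 < τ α ∧ Function.Periodic (u α) (τ α) ∧
      ∀ T : ℝ, 0 < T → Function.Periodic (u α) T → τ α ≤ T) :
    ContinuousOn τ (Ioo u₀ 1) :=
  period_function_continuous_general n hn N hN u₀ hu₀ u τ hsol hpos hτ
end

section
/- Fix an integer n ≥ 3, set N = 2n/(n-2) and u₀ = ((n-2)/n)^((n-2)/4). For α ∈ (u₀, 1), let u_α : ℝ → ℝ be the unique solution of 4u'' - (n-2)²u + n(n-2)u^(N-1) = 0 with u_α(0) = α, u_α'(0) = 0, and let τ(α) denote its minimal positive period. Then τ(α) → +∞ as α → 1 from the left. -/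
open Set Filter Real Topology Function

/-!
Along a solution the energy `2u'² + ((n-2)²/2)(u^N - u²)` is conserved and, at `t = 0`, negative;
hence `u < 1`, so `|u''| ≤ n² u`, and Gronwall's inequality for `u'² + n² u²` shows that starting
from a critical point `u` grows at most like `e^{nt}`. Over one period `u` climbs from its minimum
`β` back to `α`, so `α ≤ β e^{nτ}`. As `u''(0) < 0`, `β < α`; since `x ↦ x^N - x²` increases on
`[u₀, 1]`, energy conservation forces `β < u₀`, and there it gives `β² ≤ (n/2)(α² - α^N)`, which
tends to `0` as `α → 1`.
-/

lemma two_lt_two_mul_div_sub_two {a : ℝ} (ha : 2 < a) : 2 < 2 * a / (a - 2) := by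
  rw [lt_div_iff₀ (by linarith)]
  linarith

/-- `N u₀ ^ (N - 2) = 2` is the equation `(a - 2)² u₀ = a (a - 2) u₀ ^ (N - 1)` of the constant
solution. -/
lemma mul_rpow_sub_two_eq_two {a : ℝ} (ha : 2 < a) :
    2 * a / (a - 2) * (((a - 2) / a) ^ ((a - 2) / 4)) ^ (2 * a / (a - 2) - 2) = 2 := by
  have ha2 : a - 2 ≠ 0 := by linarith
  have hexp : (a - 2) / 4 * (2 * a / (a - 2) - 2) = 1 := by field_simp; ring
  rw [← rpow_mul (div_pos (by linarith) (by linarith)).le, hexp, rpow_one]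
  field_simp

lemma rpow_lt_sq_of_lt_one {x N : ℝ} (h0 : 0 < x) (h1 : x < 1) (hN : 2 < N) :
    x ^ N < x ^ 2 := by
  simpa using rpow_lt_rpow_of_exponent_gt h0 h1 hN

lemma sq_le_rpow_of_one_le {x N : ℝ} (h1 : 1 ≤ x) (hN : 2 ≤ N) : x ^ 2 ≤ x ^ N := by
  simpa using rpow_le_rpow_of_exponent_le h1 hN

/-- The derivative of `x ^ N - x ^ 2` is `x * (N * x ^ (N - 2) - 2)`. -/
lemma strictMonoOn_rpow_sub_sq {N u₀ : ℝ} (hN : 2 < N) (hu₀ : 0 < u₀)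
    (hu₀N : N * u₀ ^ (N - 2) = 2) : StrictMonoOn (fun x : ℝ => x ^ N - x ^ 2) (Ici u₀) := by
  refine strictMonoOn_of_deriv_pos (convex_Ici _) ?_ fun x hx => ?_
  · exact ((continuousOn_id.rpow_const fun x hx => Or.inr (by linarith)).sub
      (continuous_pow 2).continuousOn)
  rw [interior_Ici] at hx
  have hx0 : 0 < x := hu₀.trans hx
  have hd : HasDerivAt (fun x : ℝ => x ^ N - x ^ 2) (N * x ^ (N - 1) - (2 : ℕ) * x ^ 1) x :=
    (hasDerivAt_rpow_const (Or.inl hx0.ne')).sub (hasDerivAt_pow 2 x)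
  have hsplit : x ^ (N - 1) = x * x ^ (N - 2) := by
    rw [show N - 1 = 1 + (N - 2) by ring, rpow_add hx0, rpow_one]
  have hlt : u₀ ^ (N - 2) < x ^ (N - 2) := rpow_lt_rpow hu₀.le hx (by linarith)
  rw [hd.deriv, hsplit]
  push_cast
  nlinarith [mul_lt_mul_of_pos_left hlt (mul_pos hx0 (by linarith : (0 : ℝ) < N))]

lemma mul_sq_le_sq_sub_rpow {N u₀ x : ℝ} (hN : 2 < N) (hx : 0 < x) (hxu₀ : x ≤ u₀)
    (hu₀N : N * u₀ ^ (N - 2) = 2) : (1 - 2 / N) * x ^ 2 ≤ x ^ 2 - x ^ N := by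
  have hsplit : x ^ N = x ^ 2 * x ^ (N - 2) := by
    rw [← rpow_two, ← rpow_add hx]
    ring_nf
  have hu₀N' : u₀ ^ (N - 2) = 2 / N := by
    rw [eq_div_iff (by linarith)]
    linarith
  have hle : x ^ (N - 2) ≤ 2 / N := hu₀N' ▸ rpow_le_rpow hx.le hxu₀ (by linarith)
  rw [hsplit]
  nlinarith [mul_le_mul_of_nonneg_left hle (sq_nonneg x)]

lemma Function.Periodic.exists_mem_Icc_forall_le {α : Type*} [LinearOrder α] [TopologicalSpace α]
    [OrderClosedTopology α] {f : ℝ → α} {c : ℝ} (hp : Periodic f c) (hc : 0 < c)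
    (hf : Continuous f) : ∃ t₀ ∈ Icc 0 c, ∀ s, f t₀ ≤ f s := by
  obtain ⟨t₀, ht₀, hmin⟩ :=
    isCompact_Icc.exists_isMinOn (nonempty_Icc.2 hc.le) hf.continuousOn
  refine ⟨t₀, ht₀, fun s => ?_⟩
  obtain ⟨y, hy, hys⟩ : f s ∈ f '' Icc 0 (0 + c) := hp.image_Icc hc 0 ▸ mem_range_self s
  exact hys ▸ hmin (by simpa using hy)

lemma not_isLocalMin_of_deriv_deriv_neg {f : ℝ → ℝ} {x : ℝ} (hf : deriv (deriv f) x < 0)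
    (hd : deriv f x = 0) (hc : ContinuousAt f x) : ¬IsLocalMin f x := by
  intro hmin
  have hconst : f =ᶠ[𝓝 x] fun _ => f x := by
    filter_upwards [hmin, isLocalMax_of_deriv_deriv_neg hf hd hc] with y h₁ h₂
    exact le_antisymm h₂ h₁
  have := hconst.deriv.deriv_eq
  simp only [deriv_const', deriv_const] at this
  exact hf.ne this

lemma sq_deriv_add_sq_le_mul_exp {f : ℝ → ℝ} {k s t : ℝ} (hf : Differentiable ℝ f)
    (hf' : Differentiable ℝ (deriv f)) (hk : 0 ≤ k)
    (hbound : ∀ x, |deriv (deriv f) x| ≤ k ^ 2 * |f x|) (hst : s ≤ t) :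
    deriv f t ^ 2 + k ^ 2 * f t ^ 2
      ≤ (deriv f s ^ 2 + k ^ 2 * f s ^ 2) * exp (2 * k * (t - s)) := by
  set g := fun x => deriv f x ^ 2 + k ^ 2 * f x ^ 2
  set g' := fun x => 2 * deriv f x * deriv (deriv f) x + k ^ 2 * (2 * f x * deriv f x)
  have hg : ∀ x, HasDerivAt g (g' x) x := fun x =>
    (((hf' x).hasDerivAt.fun_pow 2).add
      (((hf x).hasDerivAt.fun_pow 2).const_mul (k ^ 2))).congr_deriv (by norm_num [g'])
  have hg_nonneg : ∀ x, 0 ≤ g x := fun x => by positivity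
  have hg' : ∀ x, |g' x| ≤ 2 * k * g x := by
    intro x
    have h₁ : |2 * deriv f x * deriv (deriv f) x| ≤ 2 * |deriv f x| * (k ^ 2 * |f x|) := by
      rw [abs_mul, abs_mul, abs_two]
      exact mul_le_mul_of_nonneg_left (hbound x) (by positivity)
    have h₂ : |k ^ 2 * (2 * f x * deriv f x)| = 2 * |deriv f x| * (k ^ 2 * |f x|) := by
      rw [abs_mul, abs_mul, abs_mul, abs_two, abs_of_nonneg (sq_nonneg k)]
      ring
    have hamgm := two_mul_le_add_sq |deriv f x| (k * |f x|)
    rw [sq_abs, mul_pow, sq_abs] at hamgm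
    have h₃ := abs_add_le (2 * deriv f x * deriv (deriv f) x) (k ^ 2 * (2 * f x * deriv f x))
    calc |g' x| ≤ 4 * |deriv f x| * (k ^ 2 * |f x|) := by linarith
      _ = 2 * k * (2 * |deriv f x| * (k * |f x|)) := by ring
      _ ≤ 2 * k * g x := mul_le_mul_of_nonneg_left hamgm (by positivity)
  have h := norm_le_gronwallBound_of_norm_deriv_right_le (ε := 0)
    (fun x _ => (hg x).continuousAt.continuousWithinAt) (fun x _ => (hg x).hasDerivWithinAt)
    le_rfl (fun x _ => by simpa [abs_of_nonneg (hg_nonneg x)] using hg' x) t ⟨hst, le_rfl⟩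
  simpa [gronwallBound_ε0, abs_of_nonneg (hg_nonneg _)] using h

lemma abs_le_mul_exp_of_deriv_eq_zero {f : ℝ → ℝ} {k s t : ℝ} (hf : Differentiable ℝ f)
    (hf' : Differentiable ℝ (deriv f)) (hk : 0 < k)
    (hbound : ∀ x, |deriv (deriv f) x| ≤ k ^ 2 * |f x|) (hst : s ≤ t) (hs : deriv f s = 0) :
    |f t| ≤ |f s| * exp (k * (t - s)) := by
  have h := sq_deriv_add_sq_le_mul_exp hf hf' hk.le hbound hst
  rw [hs] at h
  have hsq : f t ^ 2 ≤ (|f s| * exp (k * (t - s))) ^ 2 := by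
    have hexp : exp (2 * k * (t - s)) = exp (k * (t - s)) ^ 2 := by
      rw [← exp_nat_mul]; ring_nf
    rw [mul_pow, sq_abs, ← hexp]
    nlinarith [sq_nonneg (deriv f t), pow_pos hk 2]
  simpa [abs_of_nonneg (exp_pos _).le] using sq_le_sq.1 hsq

lemma tendsto_sqrt_mul_sq_sub_rpow {c N : ℝ} (hc : 0 < c) (hN : 2 < N) :
    Tendsto (fun x : ℝ => √(c * (x ^ 2 - x ^ N))) (𝓝[<] 1) (𝓝[>] 0) := by
  refine tendsto_nhdsWithin_iff.2 ⟨?_, ?_⟩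
  · have h : ContinuousAt (fun x : ℝ => √(c * (x ^ 2 - x ^ N))) 1 := by
      fun_prop (disch := norm_num)
    simpa using h.tendsto.mono_left nhdsWithin_le_nhds
  · filter_upwards [Ioo_mem_nhdsLT zero_lt_one] with x hx
    exact sqrt_pos.2 (mul_pos hc (sub_pos.2 (rpow_lt_sq_of_lt_one hx.1 hx.2 hN)))

lemma tendsto_log_div_sqrt_mul_sq_sub_rpow {a N u₀ : ℝ} (ha : 0 < a) (hN : 2 < N)
    (hu₀ : 0 < u₀) :
    Tendsto (fun x : ℝ => log (u₀ / √(a / 2 * (x ^ 2 - x ^ N))) / a) (𝓝[<] 1) atTop := by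
  simp only [div_eq_mul_inv u₀]
  exact (tendsto_log_atTop.comp ((tendsto_inv_nhdsGT_zero.comp
    (tendsto_sqrt_mul_sq_sub_rpow (by positivity) hN)).const_mul_atTop hu₀)).atTop_div_const ha

structure IsPositiveSolution (a N : ℝ) (f : ℝ → ℝ) : Prop where
  contDiff : ContDiff ℝ 2 f
  pos : ∀ t, 0 < f t
  ode : ∀ t, 4 * deriv (deriv f) t - (a - 2) ^ 2 * f t + a * (a - 2) * f t ^ (N - 1) = 0

noncomputable def energy (a N : ℝ) (f : ℝ → ℝ) (t : ℝ) : ℝ :=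
  2 * deriv f t ^ 2 + (a - 2) ^ 2 / 2 * (f t ^ N - f t ^ 2)

namespace IsPositiveSolution

variable {a N : ℝ} {f : ℝ → ℝ}

lemma differentiable (hf : IsPositiveSolution a N f) : Differentiable ℝ f :=
  hf.contDiff.differentiable (by norm_num)

lemma differentiable_deriv (hf : IsPositiveSolution a N f) : Differentiable ℝ (deriv f) :=
  (hf.contDiff.iterate_deriv' 1 1).differentiable one_ne_zero

lemma hasDerivAt_energy (hf : IsPositiveSolution a N f) (ha : 2 < a)
    (hN : N = 2 * a / (a - 2)) (t : ℝ) : HasDerivAt (energy a N f) 0 t := by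
  have hf₁ := (hf.differentiable t).hasDerivAt
  have hf₂ := (hf.differentiable_deriv t).hasDerivAt
  have hcN : (a - 2) ^ 2 / 2 * N = a * (a - 2) := by
    rw [hN]
    field_simp [show a - 2 ≠ 0 by linarith]
  refine (((hf₂.fun_pow 2).const_mul 2).add (((hf₁.rpow_const (Or.inl (hf.pos t).ne')).sub
    (hf₁.fun_pow 2)).const_mul ((a - 2) ^ 2 / 2))).congr_deriv ?_
  norm_num
  linear_combination deriv f t * hf.ode t + deriv f t * f t ^ (N - 1) * hcN

lemma energy_eq (hf : IsPositiveSolution a N f) (ha : 2 < a) (hN : N = 2 * a / (a - 2))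
    (s t : ℝ) : energy a N f s = energy a N f t :=
  is_const_of_deriv_eq_zero (fun x => (hf.hasDerivAt_energy ha hN x).differentiableAt)
    (fun x => (hf.hasDerivAt_energy ha hN x).deriv) s t

lemma lt_one (hf : IsPositiveSolution a N f) (ha : 2 < a) (hN : N = 2 * a / (a - 2)) {s : ℝ}
    (hs : energy a N f s < 0) (t : ℝ) : f t < 1 := by
  by_contra! h
  have hsq := sq_le_rpow_of_one_le h (hN ▸ two_lt_two_mul_div_sub_two ha).le
  have : 0 ≤ energy a N f t := by
    unfold energy
    nlinarith [sq_nonneg (deriv f t), sq_nonneg (a - 2)]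
  linarith [hf.energy_eq ha hN s t]

lemma abs_deriv_deriv_le (hf : IsPositiveSolution a N f) (ha : 2 < a) (hN : 2 ≤ N)
    (h1 : ∀ t, f t < 1) (t : ℝ) : |deriv (deriv f) t| ≤ a ^ 2 * |f t| := by
  have hpos := hf.pos t
  have hpow : f t ^ (N - 1) ≤ f t := by
    simpa using rpow_le_rpow_of_exponent_ge hpos (h1 t).le (by linarith : (1 : ℝ) ≤ N - 1)
  have hpow₀ : 0 ≤ f t ^ (N - 1) := (rpow_pos_of_pos hpos _).le
  rw [abs_of_pos hpos, abs_le]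
  constructor <;> nlinarith [hf.ode t]

lemma deriv_deriv_neg (hf : IsPositiveSolution a N f) (ha : 2 < a) (hN : N = 2 * a / (a - 2))
    {u₀ : ℝ} (hu₀ : 0 < u₀) (hu₀N : N * u₀ ^ (N - 2) = 2) {t : ℝ} (ht : u₀ < f t) :
    deriv (deriv f) t < 0 := by
  have hpos := hf.pos t
  have hsplit : f t ^ (N - 1) = f t * f t ^ (N - 2) := by
    rw [show N - 1 = 1 + (N - 2) by ring, rpow_add hpos, rpow_one]
  have hlt : u₀ ^ (N - 2) < f t ^ (N - 2) :=
    rpow_lt_rpow hu₀.le ht (by linarith [hN ▸ two_lt_two_mul_div_sub_two ha])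
  have hgt : a - 2 < a * f t ^ (N - 2) := by
    have hNa : N * (a - 2) = 2 * a := by
      rw [hN]
      field_simp [show a - 2 ≠ 0 by linarith]
    have hu₀a : a * u₀ ^ (N - 2) = a - 2 := mul_left_cancel₀ (by nlinarith : N ≠ 0)
      (by linear_combination a * hu₀N - hNa)
    nlinarith
  nlinarith [hf.ode t, mul_pos hpos (by linarith : (0 : ℝ) < a - 2)]

lemma mul_sq_min_le (hf : IsPositiveSolution a N f) (ha : 2 < a) (hN : N = 2 * a / (a - 2))
    {u₀ : ℝ} (hu₀ : 0 < u₀) (hu₀N : N * u₀ ^ (N - 2) = 2) (hα : u₀ < f 0)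
    (hd : deriv f 0 = 0) {t₀ : ℝ} (hmin : ∀ s, f t₀ ≤ f s) :
    2 / a * f t₀ ^ 2 ≤ f 0 ^ 2 - f 0 ^ N := by
  have hN2 : 2 < N := hN ▸ two_lt_two_mul_div_sub_two ha
  have hd₀ : deriv f t₀ = 0 := IsLocalMin.deriv_eq_zero (Eventually.of_forall hmin)
  have heq : f t₀ ^ N - f t₀ ^ 2 = f 0 ^ N - f 0 ^ 2 := by
    have h := hf.energy_eq ha hN t₀ 0
    simp only [energy, hd₀, hd] at h
    have : (0 : ℝ) < (a - 2) ^ 2 / 2 := by nlinarith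
    nlinarith
  have hlt : f t₀ < f 0 := by
    refine (hmin 0).lt_of_ne fun h => not_isLocalMin_of_deriv_deriv_neg
      (hf.deriv_deriv_neg ha hN hu₀ hu₀N hα) hd (hf.differentiable 0).continuousAt ?_
    exact Eventually.of_forall fun s => h ▸ hmin s
  have hle : f t₀ ≤ u₀ := by
    by_contra! h
    exact (strictMonoOn_rpow_sub_sq hN2 hu₀ hu₀N h.le hα.le hlt).ne heq
  have h2a : 1 - 2 / N = 2 / a := by
    rw [hN]
    field_simp [show a - 2 ≠ 0 by linarith]
    ring
  linarith [h2a ▸ mul_sq_le_sq_sub_rpow hN2 (hf.pos t₀) hle hu₀N]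

lemma log_div_sqrt_le_period (hf : IsPositiveSolution a N f) (ha : 2 < a)
    (hN : N = 2 * a / (a - 2)) {u₀ : ℝ} (hu₀ : 0 < u₀) (hu₀N : N * u₀ ^ (N - 2) = 2)
    (hα : f 0 ∈ Ioo u₀ 1) (hd : deriv f 0 = 0) {T : ℝ} (hper : Periodic f T) (hT : 0 < T) :
    log (u₀ / √(a / 2 * (f 0 ^ 2 - f 0 ^ N))) / a ≤ T := by
  have hN2 : 2 < N := hN ▸ two_lt_two_mul_div_sub_two ha
  have hα0 : 0 < f 0 := hu₀.trans hα.1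
  have hE : energy a N f 0 < 0 := by
    have hc : 0 < (a - 2) ^ 2 / 2 := div_pos (pow_pos (by linarith) 2) two_pos
    simp only [energy, hd]
    nlinarith [mul_pos hc (sub_pos.2 (rpow_lt_sq_of_lt_one hα0 hα.2 hN2))]
  obtain ⟨t₀, ⟨ht₀, ht₀T⟩, hmin⟩ :=
    hper.exists_mem_Icc_forall_le hT hf.contDiff.continuous
  have hβ : f t₀ ≤ √(a / 2 * (f 0 ^ 2 - f 0 ^ N)) := by
    refine le_sqrt_of_sq_le ?_
    have := hf.mul_sq_min_le ha hN hu₀ hu₀N hα.1 hd hmin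
    rw [div_mul_eq_mul_div, div_le_iff₀ (by linarith)] at this
    linarith
  have hgrowth : f 0 ≤ f t₀ * exp (a * T) := by
    have h := abs_le_mul_exp_of_deriv_eq_zero hf.differentiable hf.differentiable_deriv
      (by linarith) (hf.abs_deriv_deriv_le ha hN2.le (hf.lt_one ha hN hE)) ht₀T
      (IsLocalMin.deriv_eq_zero (Eventually.of_forall hmin))
    rw [abs_of_pos (hf.pos T), abs_of_pos (hf.pos t₀), ← zero_add T, hper 0] at h
    exact h.trans (mul_le_mul_of_nonneg_left (exp_le_exp.2 (by nlinarith)) (hf.pos t₀).le)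
  have hroot : 0 < √(a / 2 * (f 0 ^ 2 - f 0 ^ N)) := (hf.pos t₀).trans_le hβ
  rw [div_le_iff₀ (by linarith), ← log_exp (T * a)]
  refine log_le_log (div_pos hu₀ hroot) ?_
  rw [div_le_iff₀ hroot, mul_comm T]
  nlinarith [mul_le_mul_of_nonneg_right hβ (exp_pos (a * T)).le, hα.1]

end IsPositiveSolution

theorem period_function_tendsto_atTop_general
    (n : ℕ) (hn : 3 ≤ n) (N : ℝ) (hN : N = 2 * (n : ℝ) / ((n : ℝ) - 2))
    (u₀ : ℝ) (hu₀ : u₀ = (((n : ℝ) - 2) / (n : ℝ)) ^ (((n : ℝ) - 2) / 4))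
    (u : ℝ → ℝ → ℝ) (τ : ℝ → ℝ)
    (hsol : ∀ α ∈ Ioo u₀ 1,
      ContDiff ℝ 2 (u α) ∧ u α 0 = α ∧ deriv (u α) 0 = 0 ∧
      ∀ t : ℝ, 4 * deriv (deriv (u α)) t - ((n : ℝ) - 2) ^ 2 * u α t
          + (n : ℝ) * ((n : ℝ) - 2) * u α t ^ (N - 1) = 0)
    (hpos : ∀ α ∈ Ioo u₀ 1, ∀ t : ℝ, 0 < u α t)
    (hτ : ∀ α ∈ Ioo u₀ 1,
      0 < τ α ∧ Function.Periodic (u α) (τ α) ∧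
      ∀ T : ℝ, 0 < T → Function.Periodic (u α) T → τ α ≤ T) :
    Filter.Tendsto τ (nhdsWithin 1 (Ioo u₀ 1)) Filter.atTop := by
  have ha : (2 : ℝ) < n := by exact_mod_cast hn
  have hN2 : 2 < N := hN ▸ two_lt_two_mul_div_sub_two ha
  have hu₀pos : 0 < u₀ := hu₀ ▸ rpow_pos_of_pos (div_pos (by linarith) (by linarith)) _
  have hu₀N : N * u₀ ^ (N - 2) = 2 := by
    rw [hu₀, hN]
    exact mul_rpow_sub_two_eq_two ha
  refine tendsto_atTop_mono' _ ?_ ((tendsto_log_div_sqrt_mul_sq_sub_rpow (a := n)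
    (by linarith) hN2 hu₀pos).mono_left (nhdsWithin_mono _ Ioo_subset_Iio_self))
  filter_upwards [self_mem_nhdsWithin] with α hα
  obtain ⟨hcont, h0, hd, hode⟩ := hsol α hα
  obtain ⟨hT, hper, -⟩ := hτ α hα
  have h := IsPositiveSolution.log_div_sqrt_le_period ⟨hcont, hpos α hα, hode⟩ ha hN hu₀pos
    hu₀N (by rwa [h0]) hd hper hT
  rwa [h0] at h

/-- In the setting of the period function `τ` for
`4u'' - (n-2)²u + n(n-2)u^(N-1) = 0`, one has `τ(α) → +∞` as `α → 1⁻` (within the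
domain `(u₀,1)`). -/
theorem period_function_tendsto_atTop
    (n : ℕ) (hn : 3 ≤ n) (N : ℝ) (hN : N = 2 * (n : ℝ) / ((n : ℝ) - 2))
    (u₀ : ℝ) (hu₀ : u₀ = (((n : ℝ) - 2) / (n : ℝ)) ^ (((n : ℝ) - 2) / 4))
    (u : ℝ → ℝ → ℝ) (τ : ℝ → ℝ)
    (hsol : ∀ α ∈ Ioo u₀ 1,
      ContDiff ℝ 2 (u α) ∧ u α 0 = α ∧ deriv (u α) 0 = 0 ∧
      ∀ t : ℝ, 4 * deriv (deriv (u α)) t - ((n : ℝ) - 2) ^ 2 * u α t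
          + (n : ℝ) * ((n : ℝ) - 2) * u α t ^ (N - 1) = 0)
    (hpos : ∀ α ∈ Ioo u₀ 1, ∀ t : ℝ, 0 < u α t)
    (hnc : ∀ α ∈ Ioo u₀ 1, ∃ t₁ t₂ : ℝ, u α t₁ ≠ u α t₂)
    (hτ : ∀ α ∈ Ioo u₀ 1,
      0 < τ α ∧ Function.Periodic (u α) (τ α) ∧
      ∀ T : ℝ, 0 < T → Function.Periodic (u α) T → τ α ≤ T) :
    Filter.Tendsto τ (nhdsWithin 1 (Ioo u₀ 1)) Filter.atTop :=
  period_function_tendsto_atTop_general n hn N hN u₀ hu₀ u τ hsol hpos hτ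
end

section
/- Fix an integer n ≥ 3, set N = 2n/(n-2) and u₀ = ((n-2)/n)^((n-2)/4). For α ∈ (u₀, 1), let u_α : ℝ → ℝ be the unique solution of 4u'' - (n-2)²u + n(n-2)u^(N-1) = 0 with u_α(0) = α, u_α'(0) = 0, and let τ(α) denote its minimal positive period. Then τ(α) → 2π/√(n-2) as α → u₀ from the right. -/
/-!
Write the equation as `u'' = g u` with `g u₀ = 0` and `g' u₀ = -(n - 2)`. For every `ε > 0`,
`|g (u₀ + x) + (n - 2) x| ≤ ε |x|` near `u₀`, and the conserved energy `u'² / 2 + V u`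
(`V' = -g`, strict minimum at `u₀`) keeps orbits starting close to `u₀` inside that window.
There `u - u₀` is squeezed between the harmonic oscillators of frequencies `√(n - 2 ± ε)`,
so Sturm comparison against `sin (√λ t)` places consecutive crossings of the level `u₀`
between `π / √(n - 2 + ε)` and `π / √(n - 2 - ε)` apart. The energy also shows that all
crossings are transversal with the same speed `|u'|`, so by uniqueness for the ODE the
minimal period is the distance from one crossing to the next-but-one.
-/

open Set Real Filter Topology Function Metric

/-- The Wronskian of `v` and the comparison solution `sin (r * (t - c))` of `w'' = -r² w`. -/
noncomputable def sturmWronskian (v v' : ℝ → ℝ) (r c t : ℝ) : ℝ :=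
  r * v t * cos (r * (t - c)) - v' t * sin (r * (t - c))

section Sturm

variable {v v' v'' : ℝ → ℝ}

theorem hasDerivAt_sturmWronskian (hv : ∀ t, HasDerivAt v (v' t) t)
    (hv' : ∀ t, HasDerivAt v' (v'' t) t) (r c t : ℝ) :
    HasDerivAt (sturmWronskian v v' r c) ((-(r ^ 2 * v t) - v'' t) * sin (r * (t - c))) t := by
  have hlin : HasDerivAt (fun t => r * (t - c)) r t := by
    simpa using ((hasDerivAt_id t).sub_const c).const_mul r
  exact ((((hv t).const_mul r).mul ((hasDerivAt_cos _).comp t hlin)).sub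
    ((hv' t).mul ((hasDerivAt_sin _).comp t hlin))).congr_deriv (by simp only [comp_apply]; ring)

theorem monotoneOn_sturmWronskian (hv : ∀ t, HasDerivAt v (v' t) t)
    (hv' : ∀ t, HasDerivAt v' (v'' t) t) {r c d : ℝ} (hr : 0 < r) (hd : d ≤ c + π / r)
    (h : ∀ t ∈ Icc c d, v'' t ≤ -r ^ 2 * v t) :
    MonotoneOn (sturmWronskian v v' r c) (Icc c d) := by
  have hW := hasDerivAt_sturmWronskian hv hv' r c
  refine monotoneOn_of_hasDerivWithinAt_nonneg (convex_Icc c d)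
    (HasDerivAt.continuousOn fun t _ => hW t) (fun t _ => (hW t).hasDerivWithinAt) ?_
  rw [interior_Icc]
  intro t ht
  have hsin : 0 ≤ sin (r * (t - c)) := by
    refine sin_nonneg_of_nonneg_of_le_pi (by nlinarith [ht.1]) ?_
    have : t - c ≤ π / r := by linarith [ht.2]
    rwa [le_div_iff₀' hr] at this
  exact mul_nonneg (by linarith [h t (Ioo_subset_Icc_self ht)]) hsin

theorem apply_add_pi_div_sqrt_le_neg (hv : ∀ t, HasDerivAt v (v' t) t)
    (hv' : ∀ t, HasDerivAt v' (v'' t) t) {lam c : ℝ} (hlam : 0 < lam)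
    (h : ∀ t ∈ Icc c (c + π / √lam), v'' t ≤ -lam * v t) :
    v (c + π / √lam) ≤ -v c := by
  have hr : 0 < √lam := sqrt_pos.2 hlam
  have hmono := monotoneOn_sturmWronskian hv hv' hr le_rfl
    (by simpa only [sq_sqrt hlam.le] using h)
  have hcd : c ≤ c + π / √lam := le_add_of_nonneg_right (div_pos pi_pos hr).le
  have hπ : √lam * (c + π / √lam - c) = π := by field_simp; ring
  have := hmono (left_mem_Icc.2 hcd) (right_mem_Icc.2 hcd) hcd
  simp only [sturmWronskian, sub_self, mul_zero, cos_zero, sin_zero, hπ, cos_pi, sin_pi] at this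
  nlinarith

theorem pi_div_sqrt_le_sub_of_zeros (hv : ∀ t, HasDerivAt v (v' t) t)
    (hv' : ∀ t, HasDerivAt v' (v'' t) t) {lam a b : ℝ} (hlam : 0 < lam) (hab : a < b)
    (ha : v a = 0) (hb : v b = 0) (h : ∀ t ∈ Icc a b, -lam * v t ≤ v'' t) (hb' : v' b < 0) :
    π / √lam ≤ b - a := by
  by_contra! hlt
  have hr : 0 < √lam := sqrt_pos.2 hlam
  have hmono := monotoneOn_sturmWronskian (v := fun t => -v t) (v'' := fun t => -v'' t)
    (fun t => (hv t).neg) (fun t => (hv' t).neg) (c := a) (d := b) hr (by linarith)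
    (fun t ht => by rw [sq_sqrt hlam.le]; linarith [h t ht])
  have hsin : 0 < sin (√lam * (b - a)) :=
    sin_pos_of_pos_of_lt_pi (by nlinarith) (by rwa [lt_div_iff₀' hr] at hlt)
  have := hmono (left_mem_Icc.2 hab.le) (right_mem_Icc.2 hab.le) hab.le
  simp only [sturmWronskian, ha, hb, neg_zero, mul_zero, zero_mul, sub_self, sin_zero] at this
  nlinarith

end Sturm

theorem IsPreconnected.forall_pos_or_forall_neg {s : Set ℝ} {f : ℝ → ℝ} (hs : IsPreconnected s)
    (hf : ContinuousOn f s) (h : ∀ t ∈ s, f t ≠ 0) :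
    (∀ t ∈ s, 0 < f t) ∨ ∀ t ∈ s, f t < 0 := by
  by_contra! hcon
  obtain ⟨⟨x, hx, hfx⟩, ⟨y, hy, hfy⟩⟩ := hcon
  obtain ⟨z, hz, hfz⟩ := hs.intermediate_value hx hy hf ⟨hfx, hfy⟩
  exact h z hz hfz

theorem Function.Periodic.hasDerivAt_periodic {f f' : ℝ → ℝ} {T : ℝ} (hf : Periodic f T)
    (h : ∀ t, HasDerivAt f (f' t) t) : Periodic f' T := fun t => by
  have := (h (t + T)).comp_add_const t T
  rw [show (fun x => f (x + T)) = f from funext hf] at this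
  exact this.unique (h t)

structure IsPerturbedOscillator (μ ε : ℝ) (v v' v'' : ℝ → ℝ) : Prop where
  hasDerivAt : ∀ t, HasDerivAt v (v' t) t
  hasDerivAt_deriv : ∀ t, HasDerivAt v' (v'' t) t
  abs_add_mul_le : ∀ t, |v'' t + μ * v t| ≤ ε * |v t|

namespace IsPerturbedOscillator

variable {μ ε : ℝ} {v v' v'' : ℝ → ℝ}

theorem neg (h : IsPerturbedOscillator μ ε v v' v'') :
    IsPerturbedOscillator μ ε (fun t => -v t) (fun t => -v' t) (fun t => -v'' t) where
  hasDerivAt t := (h.hasDerivAt t).neg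
  hasDerivAt_deriv t := (h.hasDerivAt_deriv t).neg
  abs_add_mul_le t := by
    simpa only [← neg_add, mul_neg, abs_neg] using h.abs_add_mul_le t

theorem continuous (h : IsPerturbedOscillator μ ε v v' v'') : Continuous v :=
  Differentiable.continuous fun t => (h.hasDerivAt t).differentiableAt

theorem second_deriv_mem_Icc (h : IsPerturbedOscillator μ ε v v' v'') {t : ℝ} (ht : 0 ≤ v t) :
    v'' t ∈ Icc (-(μ + ε) * v t) (-(μ - ε) * v t) := by
  have := abs_le.1 (h.abs_add_mul_le t)
  rw [abs_of_nonneg ht] at this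
  constructor <;> linarith [this.1, this.2]

theorem exists_zero_mem_Ioc (h : IsPerturbedOscillator μ ε v v' v'') (hεμ : ε < μ) (a : ℝ) :
    ∃ z ∈ Ioc a (a + π / √(μ - ε)), v z = 0 := by
  have hlam : 0 < μ - ε := sub_pos.2 hεμ
  have hL : a < a + π / √(μ - ε) := lt_add_of_pos_right a (div_pos pi_pos (sqrt_pos.2 hlam))
  by_contra! hne
  wlog hpos : ∀ t ∈ Ioc a (a + π / √(μ - ε)), 0 < v t generalizing v v' v''
  · refine this h.neg (fun t ht => neg_ne_zero.2 (hne t ht)) fun t ht => neg_pos.2 ?_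
    exact ((isPreconnected_Ioc.forall_pos_or_forall_neg h.continuous.continuousOn hne).resolve_left
      hpos) t ht
  have hnn : ∀ t ∈ Icc a (a + π / √(μ - ε)), 0 ≤ v t := by
    rw [← closure_Ioc hL.ne]
    exact closure_minimal (fun t ht => (hpos t ht).le) (isClosed_le continuous_const h.continuous)
  have := apply_add_pi_div_sqrt_le_neg h.hasDerivAt h.hasDerivAt_deriv hlam
    fun t ht => (h.second_deriv_mem_Icc (hnn t ht)).2
  linarith [hpos _ (right_mem_Ioc.2 hL), hnn a (left_mem_Icc.2 hL.le)]

theorem exists_first_zero_mem_Ioc (h : IsPerturbedOscillator μ ε v v' v'') (hεμ : ε < μ) {a : ℝ}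
    (ha' : v' a ≠ 0) :
    ∃ b ∈ Ioc a (a + π / √(μ - ε)), v b = 0 ∧ ∀ t ∈ Ioo a b, v t ≠ 0 := by
  set L := π / √(μ - ε)
  have hL : 0 < L := div_pos pi_pos (sqrt_pos.2 (sub_pos.2 hεμ))
  obtain ⟨c, hac, hc⟩ := (nhdsGT_basis a).eventually_iff.1
    (nhdsGT_le_nhdsNE a ((h.hasDerivAt a).eventually_ne ha' (c := 0)))
  set c' := min c (a + L)
  have hac' : a < c' := lt_min hac (by linarith)
  set Z := Icc c' (a + L) ∩ v ⁻¹' {0}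
  have hZ : Z.Nonempty := by
    obtain ⟨z, hz, hz0⟩ := h.exists_zero_mem_Ioc hεμ a
    refine ⟨z, ⟨?_, hz.2⟩, hz0⟩
    by_contra! hzc
    exact hc ⟨hz.1, hzc.trans_le (min_le_left _ _)⟩ hz0
  have hZc : IsClosed Z := isClosed_Icc.inter (isClosed_singleton.preimage h.continuous)
  have hbZ : sInf Z ∈ Z := hZc.csInf_mem hZ ⟨c', fun t ht => ht.1.1⟩
  refine ⟨sInf Z, ⟨hac'.trans_le hbZ.1.1, hbZ.1.2⟩, hbZ.2, fun t ht ht0 => ?_⟩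
  rcases lt_or_ge t c' with htc | htc
  · exact hc ⟨ht.1, htc.trans_le (min_le_left _ _)⟩ ht0
  · have htZ : t ∈ Z := ⟨⟨htc, ht.2.le.trans hbZ.1.2⟩, ht0⟩
    exact (csInf_le ⟨c', fun t ht => ht.1.1⟩ htZ).not_gt ht.2

theorem deriv_neg_and_le_sub_of_zeros (h : IsPerturbedOscillator μ ε v v' v'') (hε : 0 ≤ ε)
    (hμ : 0 < μ) {a b : ℝ} (hab : a < b) (ha : v a = 0) (hb : v b = 0)
    (hne : ∀ t ∈ Ioo a b, v t ≠ 0) (ha' : 0 < v' a) (hb' : v' b ≠ 0) :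
    v' b < 0 ∧ π / √(μ + ε) ≤ b - a := by
  have hpos : ∀ t ∈ Ioo a b, 0 < v t := by
    refine (isPreconnected_Ioo.forall_pos_or_forall_neg h.continuous.continuousOn hne).resolve_right
      fun hneg => ?_
    have hsign := eventually_nhdsWithin_sign_eq_of_deriv_pos ((h.hasDerivAt a).deriv ▸ ha') ha
    obtain ⟨t, hts, ht⟩ := ((hsign.filter_mono nhdsWithin_le_nhds).and (Ioo_mem_nhdsGT hab)).exists
    rw [sign_pos (sub_pos.2 ht.1), sign_eq_one_iff] at hts
    exact (hneg t ht).not_gt hts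
  have hb'neg : v' b < 0 := by
    refine hb'.lt_or_gt.resolve_right fun hb'pos => ?_
    have hsign := eventually_nhdsWithin_sign_eq_of_deriv_pos ((h.hasDerivAt b).deriv ▸ hb'pos) hb
    obtain ⟨t, hts, ht⟩ := ((hsign.filter_mono nhdsWithin_le_nhds).and (Ioo_mem_nhdsLT hab)).exists
    rw [sign_neg (sub_neg.2 ht.2), sign_eq_neg_one_iff] at hts
    exact (hpos t ht).not_gt hts
  have hnn : ∀ t ∈ Icc a b, 0 ≤ v t := by
    intro t ht
    rcases ht.1.eq_or_lt with rfl | hat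
    · exact ha.ge
    rcases ht.2.eq_or_lt with rfl | htb
    · exact hb.ge
    exact (hpos t ⟨hat, htb⟩).le
  exact ⟨hb'neg, pi_div_sqrt_le_sub_of_zeros h.hasDerivAt h.hasDerivAt_deriv (by linarith) hab ha hb
    (fun t ht => (h.second_deriv_mem_Icc (hnn t ht)).1) hb'neg⟩

theorem mul_deriv_neg_and_le_sub_of_zeros (h : IsPerturbedOscillator μ ε v v' v'') (hε : 0 ≤ ε)
    (hμ : 0 < μ) {a b : ℝ} (hab : a < b) (ha : v a = 0) (hb : v b = 0)
    (hne : ∀ t ∈ Ioo a b, v t ≠ 0) (ha' : v' a ≠ 0) (hb' : v' b ≠ 0) :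
    v' a * v' b < 0 ∧ π / √(μ + ε) ≤ b - a := by
  rcases ha'.lt_or_gt with ha' | ha'
  · obtain ⟨hb', hL⟩ := h.neg.deriv_neg_and_le_sub_of_zeros hε hμ hab (neg_eq_zero.2 ha)
      (neg_eq_zero.2 hb) (fun t ht => neg_ne_zero.2 (hne t ht)) (neg_pos.2 ha') (neg_ne_zero.2 hb')
    exact ⟨mul_neg_of_neg_of_pos ha' (neg_neg_iff_pos.1 hb'), hL⟩
  · obtain ⟨hb', hL⟩ := h.deriv_neg_and_le_sub_of_zeros hε hμ hab ha hb hne ha' hb'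
    exact ⟨mul_neg_of_pos_of_neg ha' hb', hL⟩

theorem minimal_period_mem_Icc (h : IsPerturbedOscillator μ ε v v' v'') (hε : 0 ≤ ε)
    (hεμ : ε < μ) (htrans : ∀ t, v t = 0 → v' t ≠ 0)
    (hsq : ∀ s t, v s = 0 → v t = 0 → v' s ^ 2 = v' t ^ 2)
    (hrepeat : ∀ a P, 0 < P → v (a + P) = v a → v' (a + P) = v' a → Periodic v P)
    {T : ℝ} (hT : 0 < T) (hper : Periodic v T) (hmin : ∀ P, 0 < P → Periodic v P → T ≤ P) :
    T ∈ Icc (2 * π / √(μ + ε)) (2 * π / √(μ - ε)) := by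
  have hμ : 0 < μ := by linarith
  obtain ⟨a, -, ha⟩ := h.exists_zero_mem_Ioc hεμ 0
  obtain ⟨b, ⟨hab, hbL⟩, hb, hab0⟩ := h.exists_first_zero_mem_Ioc hεμ (htrans a ha)
  obtain ⟨c, ⟨hbc, hcL⟩, hc, hbc0⟩ := h.exists_first_zero_mem_Ioc hεμ (htrans b hb)
  obtain ⟨hab', habL⟩ := h.mul_deriv_neg_and_le_sub_of_zeros hε hμ hab ha hb hab0
    (htrans a ha) (htrans b hb)
  obtain ⟨hbc', hbcL⟩ := h.mul_deriv_neg_and_le_sub_of_zeros hε hμ hbc hb hc hbc0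
    (htrans b hb) (htrans c hc)
  have hca : v' c = v' a := by
    have hfac : (v' c - v' a) * (v' c + v' a) = 0 := by linear_combination hsq c a hc ha
    rcases mul_eq_zero.1 hfac with hfac | hfac
    · linarith
    · nlinarith [mul_pos_of_neg_of_neg hab' hbc']
  have hTle : T ≤ c - a := hmin _ (by linarith) <| hrepeat a (c - a) (by linarith)
    (by rw [add_sub_cancel, hc, ha]) (by rw [add_sub_cancel, hca])
  have hcT : c ≤ a + T := by
    by_contra! hlt
    have hzero : v (a + T) = 0 := (hper a).trans ha
    rcases lt_trichotomy (a + T) b with hTb | hTb | hTb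
    · exact hab0 _ ⟨by linarith, hTb⟩ hzero
    · have hderiv := hper.hasDerivAt_periodic h.hasDerivAt a
      rw [hTb] at hderiv
      rw [hderiv] at hab'
      exact (mul_self_nonneg _).not_gt hab'
    · exact hbc0 _ ⟨hTb, hlt⟩ hzero
  rw [mul_div_assoc, mul_div_assoc]
  constructor <;> linarith

end IsPerturbedOscillator

theorem eq_of_hasDerivAt_of_locallyLipschitz {E : Type*} [NormedAddCommGroup E] [NormedSpace ℝ E]
    {F : E → E} (hF : LocallyLipschitz F) {f g : ℝ → E} (hf : ∀ t, HasDerivAt f (F (f t)) t)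
    (hg : ∀ t, HasDerivAt g (F (g t)) t) {t₀ : ℝ} (h : f t₀ = g t₀) : f = g := by
  ext t
  obtain ⟨A, B, ht, ht₀⟩ : ∃ A B, t ∈ Ioo A B ∧ t₀ ∈ Ioo A B :=
    ⟨min t t₀ - 1, max t t₀ + 1, by constructor <;> constructor <;> grind⟩
  have hcont : ∀ φ : ℝ → E, (∀ t, HasDerivAt φ (F (φ t)) t) → Continuous φ := fun φ hφ =>
    Differentiable.continuous fun t => (hφ t).differentiableAt
  have hK : IsCompact (f '' Icc A B ∪ g '' Icc A B) :=
    (isCompact_Icc.image (hcont f hf)).union (isCompact_Icc.image (hcont g hg))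
  obtain ⟨K, hK⟩ := hF.locallyLipschitzOn.exists_lipschitzOnWith_of_compact hK
  exact ODE_solution_unique_of_mem_Ioo (v := fun _ => F) (s := fun _ => _) (fun _ _ => hK) ht₀
    (fun t ht => ⟨hf t, Or.inl ⟨t, Ioo_subset_Icc_self ht, rfl⟩⟩)
    (fun t ht => ⟨hg t, Or.inr ⟨t, Ioo_subset_Icc_self ht, rfl⟩⟩) h ht

theorem periodic_of_phase_eq {g : ℝ → ℝ} (hg : LocallyLipschitz g) {u u' : ℝ → ℝ}
    (hu : ∀ t, HasDerivAt u (u' t) t) (hu' : ∀ t, HasDerivAt u' (g (u t)) t) {a P : ℝ}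
    (h : u (a + P) = u a) (h' : u' (a + P) = u' a) : Periodic u P := by
  have hF : LocallyLipschitz fun p : ℝ × ℝ => (p.2, g p.1) :=
    LipschitzWith.prod_snd.locallyLipschitz.prodMk (hg.comp LipschitzWith.prod_fst.locallyLipschitz)
  have hphase := eq_of_hasDerivAt_of_locallyLipschitz hF
    (f := fun t => (u (t + P), u' (t + P))) (g := fun t => (u t, u' t))
    (fun t => ((hu (t + P)).comp_add_const t P).prodMk ((hu' (t + P)).comp_add_const t P))
    (fun t => (hu t).prodMk (hu' t)) (t₀ := a) (by simp only [h, h'])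
  exact fun t => congrArg Prod.fst (congrFun hphase t)

noncomputable def potential (g : ℝ → ℝ) (x₀ x : ℝ) : ℝ := -∫ y in x₀..x, g y

section Potential

variable {g : ℝ → ℝ} {x₀ : ℝ}

theorem hasDerivAt_potential (hg : Continuous g) (x : ℝ) :
    HasDerivAt (potential g x₀) (-g x) x :=
  (hg.integral_hasStrictDerivAt x₀ x).hasDerivAt.neg

theorem potential_self : potential g x₀ x₀ = 0 := by simp [potential]

theorem potential_pos (hg : Continuous g) {ρ : ℝ}
    (hsign : ∀ y ∈ closedBall x₀ ρ, y ≠ x₀ → (y - x₀) * g y < 0) {y : ℝ}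
    (hy : y ∈ closedBall x₀ ρ) (hne : y ≠ x₀) : 0 < potential g x₀ y := by
  have hV := fun x => hasDerivAt_potential (x₀ := x₀) hg x
  have hball : ∀ {x}, x ∈ uIcc x₀ y → x ∈ closedBall x₀ ρ := fun hx => by
    rw [mem_closedBall, Real.dist_eq] at hy ⊢
    exact (abs_sub_left_of_mem_uIcc hx).trans hy
  rw [← potential_self (g := g) (x₀ := x₀)]
  rcases hne.lt_or_gt with hlt | hgt
  · refine strictAntiOn_of_hasDerivWithinAt_neg (convex_Icc y x₀)
      (HasDerivAt.continuousOn fun x _ => hV x) (fun x _ => (hV x).hasDerivWithinAt) ?_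
      (left_mem_Icc.2 hlt.le) (right_mem_Icc.2 hlt.le) hlt
    rw [interior_Icc]
    intro x hx
    have := hsign x (hball (Icc_subset_uIcc' (Ioo_subset_Icc_self hx))) hx.2.ne
    nlinarith [hx.2]
  · refine strictMonoOn_of_hasDerivWithinAt_pos (convex_Icc x₀ y)
      (HasDerivAt.continuousOn fun x _ => hV x) (fun x _ => (hV x).hasDerivWithinAt) ?_
      (left_mem_Icc.2 hgt.le) (right_mem_Icc.2 hgt.le) hgt
    rw [interior_Icc]
    intro x hx
    have := hsign x (hball (Icc_subset_uIcc (Ioo_subset_Icc_self hx))) hx.1.ne'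
    nlinarith [hx.1]

theorem energy_eq (hg : Continuous g) {u u' : ℝ → ℝ} (hu : ∀ t, HasDerivAt u (u' t) t)
    (hu' : ∀ t, HasDerivAt u' (g (u t)) t) (s t : ℝ) :
    u' t ^ 2 / 2 + potential g x₀ (u t) = u' s ^ 2 / 2 + potential g x₀ (u s) := by
  have hE : ∀ t, HasDerivAt (fun t => u' t ^ 2 / 2 + potential g x₀ (u t)) 0 t := fun t =>
    (((hu' t).pow 2).div_const 2).add ((hasDerivAt_potential hg (u t)).comp t (hu t))
      |>.congr_deriv (by ring)
  exact is_const_of_deriv_eq_zero (fun t => (hE t).differentiableAt) (fun t => (hE t).deriv) t s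

end Potential

theorem forall_abs_sub_lt_of_forall_lt {u V : ℝ → ℝ} {x₀ ρ : ℝ} (hu : Continuous u)
    (h0 : |u 0 - x₀| < ρ) (hV : ∀ t, V (u t) < V (x₀ - ρ) ∧ V (u t) < V (x₀ + ρ)) (t : ℝ) :
    |u t - x₀| < ρ := by
  by_contra! ht
  obtain ⟨s, hs⟩ := intermediate_value_univ 0 t (f := fun t => |u t - x₀|) (by fun_prop) ⟨h0.le, ht⟩
  rcases (abs_eq ((abs_nonneg _).trans h0.le)).1 hs with hs | hs
  · exact (hV s).2.ne (by rw [← hs, add_sub_cancel])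
  · exact (hV s).1.ne (by rw [sub_eq_add_neg, ← hs, add_sub_cancel])

section NearEquilibrium

variable {g : ℝ → ℝ} {x₀ μ ε ρ : ℝ}

theorem HasDerivAt.exists_abs_add_mul_le (hg' : HasDerivAt g (-μ) x₀) (hg₀ : g x₀ = 0)
    (hε : 0 < ε) : ∃ ρ > 0, ∀ y ∈ closedBall x₀ ρ, |g y + μ * (y - x₀)| ≤ ε * |y - x₀| := by
  obtain ⟨ρ, hρ, hlin⟩ := nhds_basis_closedBall.eventually_iff.1
    ((hasDerivAt_iff_isLittleO.1 hg').def hε)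
  exact ⟨ρ, hρ, fun y hy => by simpa [hg₀, mul_comm] using hlin hy⟩

theorem sub_mul_neg_of_abs_add_mul_le (hεμ : ε < μ)
    (hlin : ∀ y ∈ closedBall x₀ ρ, |g y + μ * (y - x₀)| ≤ ε * |y - x₀|) {y : ℝ}
    (hy : y ∈ closedBall x₀ ρ) (hne : y ≠ x₀) : (y - x₀) * g y < 0 := by
  have hle : (y - x₀) * (g y + μ * (y - x₀)) ≤ ε * (y - x₀) ^ 2 :=
    calc (y - x₀) * (g y + μ * (y - x₀)) ≤ |y - x₀| * |g y + μ * (y - x₀)| :=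
          (le_abs_self _).trans (abs_mul _ _).le
      _ ≤ |y - x₀| * (ε * |y - x₀|) := mul_le_mul_of_nonneg_left (hlin y hy) (abs_nonneg _)
      _ = ε * (y - x₀) ^ 2 := by rw [mul_left_comm, ← sq, sq_abs]
  nlinarith [pow_pos (abs_pos.2 (sub_ne_zero.2 hne)) 2, sq_abs (y - x₀)]

theorem minimal_period_mem_Icc_of_near_equilibrium (hg : LocallyLipschitz g) (hε : 0 ≤ ε)
    (hεμ : ε < μ) (hlin : ∀ y ∈ closedBall x₀ ρ, |g y + μ * (y - x₀)| ≤ ε * |y - x₀|)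
    {u u' : ℝ → ℝ} (hu : ∀ t, HasDerivAt u (u' t) t) (hu' : ∀ t, HasDerivAt u' (g (u t)) t)
    (h0 : u' 0 = 0) (hne : u 0 ≠ x₀) (hρ : |u 0 - x₀| < ρ)
    (hV : potential g x₀ (u 0) < potential g x₀ (x₀ - ρ) ∧
      potential g x₀ (u 0) < potential g x₀ (x₀ + ρ))
    {T : ℝ} (hT : 0 < T) (hper : Periodic u T) (hmin : ∀ P, 0 < P → Periodic u P → T ≤ P) :
    T ∈ Icc (2 * π / √(μ + ε)) (2 * π / √(μ - ε)) := by
  have henergy : ∀ t, u' t ^ 2 / 2 + potential g x₀ (u t) = potential g x₀ (u 0) := fun t => by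
    simpa [h0] using energy_eq hg.continuous hu hu' 0 t
  have hball : ∀ t, u t ∈ closedBall x₀ ρ := fun t => by
    rw [mem_closedBall, Real.dist_eq]
    refine (forall_abs_sub_lt_of_forall_lt (V := potential g x₀)
      (Differentiable.continuous fun t => (hu t).differentiableAt) hρ (fun t => ?_) t).le
    constructor <;> nlinarith [henergy t, sq_nonneg (u' t), hV.1, hV.2]
  have hVpos : 0 < potential g x₀ (u 0) :=
    potential_pos hg.continuous (fun y hy => sub_mul_neg_of_abs_add_mul_le hεμ hlin hy)
      (hball 0) hne
  have hosc : IsPerturbedOscillator μ ε (fun t => u t - x₀) u' (fun t => g (u t)) :=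
    ⟨fun t => (hu t).sub_const x₀, hu', fun t => hlin _ (hball t)⟩
  have hperiodic : ∀ P, Periodic (fun t => u t - x₀) P ↔ Periodic u P := fun P =>
    forall_congr' fun t => sub_left_inj
  have hcross : ∀ t, u t - x₀ = 0 → u' t ^ 2 = 2 * potential g x₀ (u 0) := fun t ht => by
    have := henergy t
    rw [sub_eq_zero.1 ht, potential_self] at this
    linarith
  refine hosc.minimal_period_mem_Icc hε hεμ (fun t ht h't => ?_)
    (fun s t hs ht => (hcross s hs).trans (hcross t ht).symm)
    (fun a P _ h h' => (hperiodic P).2 (periodic_of_phase_eq hg hu hu' (sub_left_inj.1 h) h'))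
    hT ((hperiodic T).2 hper) fun P hP hPer => hmin P hP ((hperiodic P).1 hPer)
  have := hcross t ht
  rw [h't] at this
  linarith

end NearEquilibrium

theorem tendsto_of_forall_eventually_mem_Icc {ι : Type*} {l : Filter ι} {τ : ι → ℝ} {f : ℝ → ℝ}
    {μ : ℝ} (hf : ContinuousAt f μ)
    (h : ∀ᶠ ε in 𝓝[>] 0, ∀ᶠ i in l, τ i ∈ Icc (f (μ + ε)) (f (μ - ε))) :
    Tendsto τ l (𝓝 (f μ)) := by
  have hplus : Tendsto (fun ε => f (μ + ε)) (𝓝[>] 0) (𝓝 (f μ)) :=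
    hf.tendsto.comp (((continuous_const_add μ).tendsto' 0 μ (add_zero μ)).mono_left
      nhdsWithin_le_nhds)
  have hminus : Tendsto (fun ε => f (μ - ε)) (𝓝[>] 0) (𝓝 (f μ)) :=
    hf.tendsto.comp (((continuous_sub_left μ).tendsto' 0 μ (sub_zero μ)).mono_left
      nhdsWithin_le_nhds)
  refine tendsto_order.2 ⟨fun b hb => ?_, fun b hb => ?_⟩
  · obtain ⟨ε, hε, hbε⟩ := (h.and (hplus.eventually (lt_mem_nhds hb))).exists
    filter_upwards [hε] with i hi using hbε.trans_le hi.1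
  · obtain ⟨ε, hε, hbε⟩ := (h.and (hminus.eventually (gt_mem_nhds hb))).exists
    filter_upwards [hε] with i hi using hi.2.trans_lt hbε

theorem tendsto_minimalPeriod_of_hasDerivAt {g : ℝ → ℝ} {x₀ μ : ℝ} (hg : LocallyLipschitz g)
    (hg₀ : g x₀ = 0) (hμ : 0 < μ) (hg' : HasDerivAt g (-μ) x₀) {l : Filter ℝ}
    (hl : l ≤ 𝓝[≠] x₀) (u : ℝ → ℝ → ℝ) (τ : ℝ → ℝ)
    (hsol : ∀ᶠ α in l, ContDiff ℝ 2 (u α) ∧ u α 0 = α ∧ deriv (u α) 0 = 0 ∧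
      ∀ t, deriv (deriv (u α)) t = g (u α t))
    (hτ : ∀ᶠ α in l, 0 < τ α ∧ Periodic (u α) (τ α) ∧
      ∀ T, 0 < T → Periodic (u α) T → τ α ≤ T) :
    Tendsto τ l (𝓝 (2 * π / √μ)) := by
  refine tendsto_of_forall_eventually_mem_Icc (f := fun x => 2 * π / √x)
    (continuousAt_const.div continuous_sqrt.continuousAt (sqrt_ne_zero'.2 hμ)) ?_
  filter_upwards [Ioo_mem_nhdsGT hμ] with ε hε
  obtain ⟨ρ, hρ, hlin⟩ := hg'.exists_abs_add_mul_le hg₀ hε.1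
  have hsphere : ∀ y ∈ ({x₀ - ρ, x₀ + ρ} : Set ℝ), potential g x₀ x₀ < potential g x₀ y := by
    intro y hy
    rw [potential_self]
    refine potential_pos hg.continuous (fun y hy => sub_mul_neg_of_abs_add_mul_le hε.2 hlin hy)
      ?_ ?_
    · rcases hy with rfl | rfl <;> simp [abs_of_pos hρ]
    · rcases hy with rfl | rfl <;> linarith
  have hnear : ∀ᶠ α in 𝓝 x₀, |α - x₀| < ρ ∧ potential g x₀ α < potential g x₀ (x₀ - ρ) ∧
      potential g x₀ α < potential g x₀ (x₀ + ρ) := by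
    have hV := (hasDerivAt_potential (x₀ := x₀) hg.continuous x₀).continuousAt
    exact (eventually_abs_sub_lt x₀ hρ).and ((hV.eventually (gt_mem_nhds (hsphere _ (by simp)))).and
      (hV.eventually (gt_mem_nhds (hsphere _ (by simp)))))
  filter_upwards [hl (eventually_mem_nhdsWithin.and (nhdsWithin_le_nhds hnear)), hsol, hτ]
    with α ⟨hne, hnear⟩ ⟨hu, hu0, hu'0, hode⟩ ⟨hT, hper, hmin⟩
  rw [← hu0] at hne hnear
  exact minimal_period_mem_Icc_of_near_equilibrium hg hε.1.le hε.2 hlin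
    (fun t => (hu.differentiable two_ne_zero t).hasDerivAt)
    (fun t => hode t ▸ (hu.differentiable_deriv_two t).hasDerivAt) hu'0 hne hnear.1 hnear.2
    hT hper hmin

noncomputable def yamabeRhs (m N x : ℝ) : ℝ := ((m - 2) ^ 2 * x - m * (m - 2) * x ^ (N - 1)) / 4

section Yamabe

variable {m N u₀ : ℝ}

theorem two_lt_two_mul_div (hm : 2 < m) : 2 < 2 * m / (m - 2) := by
  rw [lt_div_iff₀ (by linarith)]
  linarith

theorem rpow_sub_two_of_eq (hm : 2 < m) (hN : N = 2 * m / (m - 2))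
    (hu₀ : u₀ = ((m - 2) / m) ^ ((m - 2) / 4)) : u₀ ^ (N - 2) = (m - 2) / m := by
  have hexp : (m - 2) / 4 * (N - 2) = 1 := by
    rw [hN]
    field_simp [(by linarith : m - 2 ≠ 0)]
    ring
  rw [hu₀, ← rpow_mul (div_pos (by linarith) (by linarith)).le, hexp, rpow_one]

theorem contDiff_yamabeRhs (hN : 2 ≤ N) : ContDiff ℝ 1 (yamabeRhs m N) := by
  have := contDiff_rpow_const_of_le (n := 1) (p := N - 1) (by push_cast; linarith)
  unfold yamabeRhs
  fun_prop

theorem yamabeRhs_eq_zero (hm : 2 < m) (hN : N = 2 * m / (m - 2))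
    (hu₀ : u₀ = ((m - 2) / m) ^ ((m - 2) / 4)) : yamabeRhs m N u₀ = 0 := by
  have hpos : 0 < u₀ := hu₀ ▸ rpow_pos_of_pos (div_pos (by linarith) (by linarith)) _
  have hsplit : u₀ ^ (N - 1) = u₀ ^ (N - 2) * u₀ := by
    rw [← rpow_add_one hpos.ne']
    ring_nf
  rw [yamabeRhs, hsplit, rpow_sub_two_of_eq hm hN hu₀]
  field_simp [(by linarith : m ≠ 0)]
  ring

theorem hasDerivAt_yamabeRhs (hm : 2 < m) (hN : N = 2 * m / (m - 2))
    (hu₀ : u₀ = ((m - 2) / m) ^ ((m - 2) / 4)) : HasDerivAt (yamabeRhs m N) (-(m - 2)) u₀ := by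
  have hpow := hasDerivAt_rpow_const (x := u₀) (p := N - 1)
    (Or.inr (by linarith [(hN ▸ two_lt_two_mul_div hm : 2 < N)]))
  refine ((((hasDerivAt_id u₀).const_mul ((m - 2) ^ 2)).sub
    (hpow.const_mul (m * (m - 2)))).div_const 4).congr_deriv ?_
  rw [show N - 1 - 1 = N - 2 by ring, rpow_sub_two_of_eq hm hN hu₀, hN]
  field_simp [(by linarith : m ≠ 0), (by linarith : m - 2 ≠ 0)]
  ring

end Yamabe

theorem period_function_limit_at_u0_general
    (n : ℕ) (hn : 3 ≤ n) (N : ℝ) (hN : N = 2 * (n : ℝ) / ((n : ℝ) - 2))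
    (u₀ : ℝ) (hu₀ : u₀ = (((n : ℝ) - 2) / (n : ℝ)) ^ (((n : ℝ) - 2) / 4))
    (u : ℝ → ℝ → ℝ) (τ : ℝ → ℝ)
    (hsol : ∀ α ∈ Ioo u₀ 1,
      ContDiff ℝ 2 (u α) ∧ u α 0 = α ∧ deriv (u α) 0 = 0 ∧
      ∀ t : ℝ, 4 * deriv (deriv (u α)) t - ((n : ℝ) - 2) ^ 2 * u α t
          + (n : ℝ) * ((n : ℝ) - 2) * u α t ^ (N - 1) = 0)
    (hτ : ∀ α ∈ Ioo u₀ 1,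
      0 < τ α ∧ Function.Periodic (u α) (τ α) ∧
      ∀ T : ℝ, 0 < T → Function.Periodic (u α) T → τ α ≤ T) :
    Filter.Tendsto τ (nhdsWithin u₀ (Ioo u₀ 1))
      (nhds (2 * Real.pi / Real.sqrt ((n : ℝ) - 2))) := by
  have hm : (2 : ℝ) < n := by
    have : (3 : ℝ) ≤ n := by exact_mod_cast hn
    linarith
  have hN2 : 2 < N := hN ▸ two_lt_two_mul_div hm
  refine tendsto_minimalPeriod_of_hasDerivAt (contDiff_yamabeRhs hN2.le).locallyLipschitz
    (yamabeRhs_eq_zero hm hN hu₀) (sub_pos.2 hm) (hasDerivAt_yamabeRhs hm hN hu₀)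
    (nhdsWithin_mono _ fun α hα => hα.1.ne') u τ ?_ (eventually_nhdsWithin_of_forall hτ)
  filter_upwards [self_mem_nhdsWithin] with α hα
  obtain ⟨hu, hu0, hu'0, hode⟩ := hsol α hα
  refine ⟨hu, hu0, hu'0, fun t => ?_⟩
  rw [yamabeRhs]
  linarith [hode t]

/-- In the setting of the period function `τ` for
`4u'' - (n-2)²u + n(n-2)u^(N-1) = 0`, one has `τ(α) → 2π/√(n-2)` as `α → u₀⁺` (within the
domain `(u₀,1)`). -/
theorem period_function_limit_at_u0
    (n : ℕ) (hn : 3 ≤ n) (N : ℝ) (hN : N = 2 * (n : ℝ) / ((n : ℝ) - 2))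
    (u₀ : ℝ) (hu₀ : u₀ = (((n : ℝ) - 2) / (n : ℝ)) ^ (((n : ℝ) - 2) / 4))
    (u : ℝ → ℝ → ℝ) (τ : ℝ → ℝ)
    (hsol : ∀ α ∈ Ioo u₀ 1,
      ContDiff ℝ 2 (u α) ∧ u α 0 = α ∧ deriv (u α) 0 = 0 ∧
      ∀ t : ℝ, 4 * deriv (deriv (u α)) t - ((n : ℝ) - 2) ^ 2 * u α t
          + (n : ℝ) * ((n : ℝ) - 2) * u α t ^ (N - 1) = 0)
    (hpos : ∀ α ∈ Ioo u₀ 1, ∀ t : ℝ, 0 < u α t)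
    (hnc : ∀ α ∈ Ioo u₀ 1, ∃ t₁ t₂ : ℝ, u α t₁ ≠ u α t₂)
    (hτ : ∀ α ∈ Ioo u₀ 1,
      0 < τ α ∧ Function.Periodic (u α) (τ α) ∧
      ∀ T : ℝ, 0 < T → Function.Periodic (u α) T → τ α ≤ T) :
    Filter.Tendsto τ (nhdsWithin u₀ (Ioo u₀ 1))
      (nhds (2 * Real.pi / Real.sqrt ((n : ℝ) - 2))) :=
  period_function_limit_at_u0_general n hn N hN u₀ hu₀ u τ hsol hτ
end

section
/- Fix an integer n ≥ 3 and set N = 2n/(n-2). Define U : (0,∞) → ℝ by U(u) = (2/(N-2))² (u^N - u²) (real power), and let U'', U''', U'''' denote its second, third and fourth derivatives. Then for every u in the open interval ((2/(N(N-1)))^(1/(N-2)), 1) one has U''(u) > 0 and 5·U'''(u)² ≥ 3·U''(u)·U''''(u); equivalently, the function u ↦ (U''(u))^(-2/3) is convex on this interval. -/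
/-! With `K = N(N-1)` one has `U'' = c(K u^(N-2) - 2)`, `U''' = cK(N-2) u^(N-3)` and
`U'''' = cK(N-2)(N-3) u^(N-4)`, and the left end of the interval is where `K u^(N-2) = 2`.
Hence `5U'''² - 3U''U'''' = c²K(N-2) u^(N-4) ((2N-1) K u^(N-2) + 6(N-3))`, which is positive
as soon as `K u^(N-2) > 2`. Convexity follows from `(f^p)'' = p f^(p-2) (f f'' - (1-p) f'²)`,
which is nonnegative for `f > 0`, `p ≤ 0` and `f f'' ≤ (1-p) f'²`; for `p = -2/3` this last
condition reads `3 f f'' ≤ 5 f'²`. -/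

theorem convexOn_rpow_comp_of_nonpos {f : ℝ → ℝ} {s : Set ℝ} {p : ℝ} (hp : p ≤ 0)
    (hs : IsOpen s) (hconv : Convex ℝ s) (hf : DifferentiableOn ℝ f s)
    (hf' : DifferentiableOn ℝ (deriv f) s) (hpos : ∀ x ∈ s, 0 < f x)
    (h : ∀ x ∈ s, f x * deriv (deriv f) x ≤ (1 - p) * deriv f x ^ 2) :
    ConvexOn ℝ s fun x => f x ^ p := by
  have hf1 : ∀ x ∈ s, HasDerivAt f (deriv f x) x := fun x hx =>
    (hf.differentiableAt (hs.mem_nhds hx)).hasDerivAt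
  have hf2 : ∀ x ∈ s, HasDerivAt (deriv f) (deriv (deriv f) x) x := fun x hx =>
    (hf'.differentiableAt (hs.mem_nhds hx)).hasDerivAt
  have hg1 : ∀ x ∈ s, HasDerivAt (fun x => f x ^ p) (deriv f x * p * f x ^ (p - 1)) x :=
    fun x hx => (hf1 x hx).rpow_const (Or.inl (hpos x hx).ne')
  have hg2 : ∀ x ∈ s, HasDerivAt (fun x => deriv f x * p * f x ^ (p - 1))
      (deriv (deriv f) x * p * f x ^ (p - 1) +
        deriv f x * p * (deriv f x * (p - 1) * f x ^ (p - 1 - 1))) x :=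
    fun x hx => ((hf2 x hx).mul_const p).mul ((hf1 x hx).rpow_const (Or.inl (hpos x hx).ne'))
  have hcont : ContinuousOn (fun x => f x ^ p) s := fun x hx =>
    (hg1 x hx).continuousAt.continuousWithinAt
  rw [← hs.interior_eq] at hg1 hg2 h hpos
  refine convexOn_of_hasDerivWithinAt2_nonneg hconv hcont (fun x hx => (hg1 x hx).hasDerivWithinAt)
    (fun x hx => (hg2 x hx).hasDerivWithinAt) fun x hx => ?_
  have hfx := hpos x hx
  have hsplit : f x ^ (p - 1) = f x * f x ^ (p - 1 - 1) := by
    rw [Real.rpow_sub_one hfx.ne' (p - 1)]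
    field_simp
  calc (0 : ℝ) ≤ -p * f x ^ (p - 1 - 1) * ((1 - p) * deriv f x ^ 2 - f x * deriv (deriv f) x) :=
        mul_nonneg (mul_nonneg (by linarith) (by positivity)) (by linarith [h x hx])
    _ = _ := by rw [hsplit]; ring

section Potential

variable (c N : ℝ)

theorem deriv_mul_rpow_sub_sq (hN : 1 ≤ N) :
    deriv (fun u : ℝ => c * (u ^ N - u ^ 2)) = fun u => c * (N * u ^ (N - 1) - 2 * u) := by
  ext u
  rw [deriv_const_mul_field, deriv_fun_sub (Real.differentiable_rpow_const hN u)
    (differentiableAt_pow 2), Real.deriv_rpow_const, deriv_pow_field]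
  norm_num

theorem deriv_deriv_mul_rpow_sub_sq (hN : 2 ≤ N) :
    deriv (deriv fun u : ℝ => c * (u ^ N - u ^ 2)) =
      fun u => c * (N * (N - 1) * u ^ (N - 2) - 2) := by
  ext u
  have hN1 : 1 ≤ N - 1 := by linarith
  rw [deriv_mul_rpow_sub_sq c N (by linarith), deriv_const_mul_field,
    deriv_fun_sub ((Real.differentiable_rpow_const hN1 u).const_mul N)
      (by fun_prop : DifferentiableAt ℝ (fun x : ℝ => 2 * x) u),
    deriv_const_mul_field, Real.deriv_rpow_const, deriv_const_mul_field, deriv_id'']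
  ring_nf

theorem deriv_deriv_deriv_mul_rpow_sub_sq (hN : 2 ≤ N) :
    deriv (deriv (deriv fun u : ℝ => c * (u ^ N - u ^ 2))) =
      fun u => c * N * (N - 1) * (N - 2) * u ^ (N - 3) := by
  ext u
  rw [deriv_deriv_mul_rpow_sub_sq c N hN, deriv_const_mul_field, deriv_sub_const,
    deriv_const_mul_field, Real.deriv_rpow_const]
  ring_nf

theorem deriv_deriv_deriv_deriv_mul_rpow_sub_sq (hN : 2 ≤ N) :
    deriv (deriv (deriv (deriv fun u : ℝ => c * (u ^ N - u ^ 2)))) =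
      fun u => c * N * (N - 1) * (N - 2) * (N - 3) * u ^ (N - 4) := by
  ext u
  rw [deriv_deriv_deriv_mul_rpow_sub_sq c N hN, deriv_const_mul_field, Real.deriv_rpow_const]
  ring_nf

end Potential

theorem sq_rpow_sub_three (N : ℝ) {u : ℝ} (hu : 0 < u) :
    (u ^ (N - 3)) ^ 2 = u ^ (N - 2) * u ^ (N - 4) := by
  rw [sq, ← Real.rpow_add hu, ← Real.rpow_add hu]
  ring_nf

theorem three_mul_mul_le_five_mul_sq {c N u : ℝ} (hc : 0 < c) (hN : 2 < N) (hu : 0 < u)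
    (hX : 2 < N * (N - 1) * u ^ (N - 2)) :
    3 * (c * (N * (N - 1) * u ^ (N - 2) - 2)) * (c * N * (N - 1) * (N - 2) * (N - 3) * u ^ (N - 4))
      ≤ 5 * (c * N * (N - 1) * (N - 2) * u ^ (N - 3)) ^ 2 := by
  have hbracket : 0 ≤ (2 * N - 1) * (N * (N - 1) * u ^ (N - 2)) + 6 * (N - 3) := by nlinarith
  have hfactor : 0 ≤ c ^ 2 * (N * (N - 1)) * (N - 2) * u ^ (N - 4) := by
    have : 0 < N * (N - 1) := by nlinarith
    have : 0 < N - 2 := by linarith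
    have : 0 < u ^ (N - 4) := Real.rpow_pos_of_pos hu _
    positivity
  rw [mul_pow, sq_rpow_sub_three N hu]
  linear_combination mul_nonneg hfactor hbracket

theorem lt_mul_rpow_of_div_rpow_inv_lt {b K p u : ℝ} (hb : 0 ≤ b) (hK : 0 < K) (hp : 0 < p)
    (hu : 0 ≤ u) (h : (b / K) ^ (1 / p) < u) : b < K * u ^ p := by
  rwa [one_div, Real.rpow_inv_lt_iff_of_pos (div_nonneg hb hK.le) hu hp, div_lt_iff₀' hK] at h

/-- With `N = 2n/(n-2)` (`n ≥ 3`) and `U(u) = (2/(N-2))²(u^N - u²)`, for every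
`u` in the interval `((2/(N(N-1)))^(1/(N-2)), 1)` one has `U''(u) > 0` and
`5U'''(u)² ≥ 3U''(u)U''''(u)`; equivalently, `u ↦ U''(u)^(-2/3)` is convex there. -/
theorem second_derivative_potential_convexity
    (n : ℕ) (hn : 3 ≤ n) (N : ℝ) (hN : N = 2 * (n : ℝ) / ((n : ℝ) - 2))
    (U : ℝ → ℝ) (hU : ∀ u : ℝ, U u = (2 / (N - 2)) ^ 2 * (u ^ N - u ^ 2)) :
    (∀ u ∈ Set.Ioo ((2 / (N * (N - 1))) ^ (1 / (N - 2))) (1 : ℝ),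
      0 < deriv (deriv U) u ∧
      5 * (deriv (deriv (deriv U)) u) ^ 2 ≥
        3 * deriv (deriv U) u * deriv (deriv (deriv (deriv U))) u) ∧
    ConvexOn ℝ (Set.Ioo ((2 / (N * (N - 1))) ^ (1 / (N - 2))) (1 : ℝ))
      (fun u => (deriv (deriv U) u) ^ (-(2 : ℝ) / 3)) := by
  have hN2 : 2 < N := by
    have hn' : (3 : ℝ) ≤ n := by exact_mod_cast hn
    rw [hN, lt_div_iff₀ (by linarith)]
    linarith
  have hc : 0 < (2 / (N - 2)) ^ 2 := pow_pos (div_pos two_pos (by linarith)) 2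
  have hK : 0 < N * (N - 1) := by nlinarith
  have hU' : U = fun u => (2 / (N - 2)) ^ 2 * (u ^ N - u ^ 2) := funext hU
  set s := Set.Ioo ((2 / (N * (N - 1))) ^ (1 / (N - 2))) (1 : ℝ)
  have hs : ∀ u ∈ s, 0 < u ∧ 2 < N * (N - 1) * u ^ (N - 2) := fun u hu =>
    have hu0 : 0 < u := (Real.rpow_nonneg (div_pos two_pos hK).le _).trans_lt hu.1
    ⟨hu0, lt_mul_rpow_of_div_rpow_inv_lt zero_le_two hK (by linarith) hu0.le hu.1⟩
  have hineq : ∀ u ∈ s, 0 < deriv (deriv U) u ∧ 5 * (deriv (deriv (deriv U)) u) ^ 2 ≥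
      3 * deriv (deriv U) u * deriv (deriv (deriv (deriv U))) u := by
    intro u hu
    obtain ⟨hu0, hX⟩ := hs u hu
    rw [hU', deriv_deriv_deriv_deriv_mul_rpow_sub_sq _ _ hN2.le,
      deriv_deriv_deriv_mul_rpow_sub_sq _ _ hN2.le, deriv_deriv_mul_rpow_sub_sq _ _ hN2.le]
    exact ⟨mul_pos hc (by linarith), three_mul_mul_le_five_mul_sq hc hN2 hu0 hX⟩
  refine ⟨hineq, convexOn_rpow_comp_of_nonpos (by norm_num) isOpen_Ioo (convex_Ioo _ _) ?_ ?_
    (fun u hu => (hineq u hu).1) fun u hu => by linarith [(hineq u hu).2]⟩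
  · rw [hU', deriv_deriv_mul_rpow_sub_sq _ _ hN2.le]
    fun_prop (disch := exact fun u hu => Or.inl (hs u hu).1.ne')
  · rw [hU', deriv_deriv_deriv_mul_rpow_sub_sq _ _ hN2.le]
    fun_prop (disch := exact fun u hu => Or.inl (hs u hu).1.ne')
end
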